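/- arXiv:1707.07443 — 10 statements merged into one kernel-verified Lean document; each statement's English description precedes it below -/
import Mathlib

section
/- Let κ > 0, ε > 0, η ∈ (0,1), p* ∈ (0,1], and c₀ = 3κ²/(2ε²·p*·η). Let t be a natural number with t ≥ max{1, 4c₀²/e²}, and let T be a random variable taking values in the positive integers such that Pr(T ≤ η·p*·t) ≤ 1/t². Then Pr(κ·√(3·ln t/(2T)) ≥ ε) ≤ 1/t². -/
open MeasureTheory ProbabilityTheory

lemma log_le_div_exp' {y : ℝ} (hy : 0 < y) : Real.log y ≤ y / Real.exp 1 := by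
  have h := Real.log_le_sub_one_of_pos (x := y / Real.exp 1) (by positivity)
  rw [Real.log_div (ne_of_gt hy) (by positivity), Real.log_exp] at h
  linarith

/-- With `c₀ = 3κ²/(2ε²p*η)` and a natural number
`t ≥ max{1, 4c₀²/e²}`, if `T` is a positive-integer-valued random variable with
`Pr(T ≤ η p* t) ≤ 1/t²`, then `Pr(κ√(3 ln t/(2T)) ≥ ε) ≤ 1/t²`. -/
theorem stmt4 {Ω : Type*} [MeasurableSpace Ω] (P : Measure Ω) [IsProbabilityMeasure P]
    (κ ε η pstar c₀ : ℝ) (hκ : 0 < κ) (hε : 0 < ε)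
    (hη : η ∈ Set.Ioo (0 : ℝ) 1) (hp : pstar ∈ Set.Ioc (0 : ℝ) 1)
    (hc₀ : c₀ = 3 * κ ^ 2 / (2 * ε ^ 2 * pstar * η))
    (t : ℕ) (ht : max 1 (4 * c₀ ^ 2 / Real.exp 1 ^ 2) ≤ (t : ℝ))
    (T : Ω → ℕ) (hT : Measurable T) (hTpos : ∀ ω, 1 ≤ T ω)
    (hTtail : P {ω | (T ω : ℝ) ≤ η * pstar * t} ≤ ENNReal.ofReal (1 / (t : ℝ) ^ 2)) :
    P {ω | ε ≤ κ * Real.sqrt (3 * Real.log t / (2 * (T ω : ℝ)))} ≤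
      ENNReal.ofReal (1 / (t : ℝ) ^ 2) := by
  obtain ⟨hη0, hη1⟩ := hη
  obtain ⟨hp0, hp1⟩ := hp
  have ht1 : (1:ℝ) ≤ t := le_trans (le_max_left _ _) ht
  have ht0 : (0:ℝ) < t := by linarith
  have hc0pos : 0 < c₀ := by rw [hc₀]; positivity
  have hln : Real.log t ≤ 2 * (Real.sqrt t / Real.exp 1) := by
    have h := log_le_div_exp' (Real.sqrt_pos.mpr ht0)
    rw [Real.log_sqrt ht0.le] at h
    linarith
  have hsqt : 2 * c₀ / Real.exp 1 ≤ Real.sqrt t := by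
    rw [show (2*c₀/Real.exp 1) = Real.sqrt ((2*c₀/Real.exp 1)^2) from
      (Real.sqrt_sq (by positivity)).symm]
    apply Real.sqrt_le_sqrt
    have h2 := le_trans (le_max_right (1:ℝ) _) ht
    calc (2*c₀/Real.exp 1)^2 = 4*c₀^2/Real.exp 1^2 := by
            rw [div_pow]; congr 1; ring
      _ ≤ (t:ℝ) := h2
  have hclog : c₀ * Real.log t ≤ t := by
    calc c₀ * Real.log t ≤ c₀ * (2 * (Real.sqrt t / Real.exp 1)) :=
          mul_le_mul_of_nonneg_left hln hc0pos.le
      _ = (2*c₀/Real.exp 1) * Real.sqrt t := by ring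
      _ ≤ Real.sqrt t * Real.sqrt t :=
          mul_le_mul_of_nonneg_right hsqt (Real.sqrt_nonneg t)
      _ = t := Real.mul_self_sqrt ht0.le
  refine le_trans (measure_mono ?_) hTtail
  intro ω hω
  simp only [Set.mem_setOf_eq] at *
  set x := 3 * Real.log t / (2 * (T ω : ℝ)) with hx
  have hTω : (1:ℝ) ≤ (T ω : ℝ) := by exact_mod_cast hTpos ω
  by_cases hxpos : 0 < x
  · have hsq : ε^2 ≤ κ^2 * x := by
      have h := mul_self_le_mul_self hε.le hω
      rw [mul_mul_mul_comm, Real.mul_self_sqrt hxpos.le] at h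
      nlinarith
    have hxe : x * (2 * (T ω : ℝ)) = 3 * Real.log t := by
      rw [hx]; field_simp
    have h1 : 2 * (T ω : ℝ) * ε^2 ≤ 3 * κ^2 * Real.log t := by
      have := mul_le_mul_of_nonneg_right hsq (by linarith : (0:ℝ) ≤ 2 * (T ω : ℝ))
      nlinarith
    have h2 : 3*κ^2 = c₀ * (2 * ε^2 * pstar * η) := by
      rw [hc₀]; field_simp
    have h3 : 3*κ^2*Real.log t ≤ 2*ε^2*pstar*η*t := by
      have := mul_le_mul_of_nonneg_left hclog
        (by positivity : (0:ℝ) ≤ 2*ε^2*pstar*η)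
      nlinarith
    have hε2 : (0:ℝ) < ε^2 := by positivity
    nlinarith [h1, h3, hε2, mul_pos (mul_pos hη0 hp0) ht0]
  · exfalso
    have : Real.sqrt x = 0 := Real.sqrt_eq_zero'.mpr (by linarith)
    rw [this, mul_zero] at hω
    linarith
end

section
/- Let μ ∈ [0,1], let X₁, X₂, … be i.i.d. random variables taking values in [0,1] with mean μ, let t ≥ 1 be a natural number, and let N be a random variable taking values in {0,1,…,t} that is independent of the sequence (X_k). Define μ̂ = (1/N)·Σ_{k=1}^{N} X_k on the event {N ≥ 1} and μ̂ = 1 on {N = 0}. Let δ > 0, η ∈ (0,1), p* ∈ (0,1], and suppose Pr(N ≤ η·p*·t) ≤ 1/t². Then Pr(|μ̂ - μ| ≥ δ) ≤ 2/(t²(1 - e^{-2δ²})) + 2·e^{-2δ²·η·p*·t}. -/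
open MeasureTheory ProbabilityTheory

/-- Analytic core of Hoeffding's lemma for `[0,1]`-valued variables. -/
lemma hoeff_analytic {p : ℝ} (hp0 : 0 ≤ p) (hp1 : p ≤ 1) {s : ℝ} (hs : 0 ≤ s) :
    1 - p + p * Real.exp s ≤ Real.exp (s * p + s ^ 2 / 8) := by
  set g : ℝ → ℝ := fun x => 1 - p + p * Real.exp x with hgdef
  have hgpos : ∀ x : ℝ, 0 ≤ x → 0 < g x := by
    intro x hx
    have h1 : 1 ≤ Real.exp x := Real.one_le_exp hx
    have : 0 ≤ p * (Real.exp x - 1) := mul_nonneg hp0 (by linarith)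
    simp only [hgdef]
    nlinarith
  set f1 : ℝ → ℝ := fun x => p + x / 4 - p * Real.exp x / g x with hf1def
  set f : ℝ → ℝ := fun x => x * p + x ^ 2 / 8 - Real.log (g x) with hfdef
  have hgderiv : ∀ x : ℝ, HasDerivAt g (p * Real.exp x) x := fun x =>
    ((Real.hasDerivAt_exp x).const_mul p).const_add (1 - p)
  -- derivative of f is f1 (where g ≠ 0)
  have hfderiv : ∀ x : ℝ, 0 ≤ x → HasDerivAt f (f1 x) x := by
    intro x hx
    have hne : g x ≠ 0 := (hgpos x hx).ne'
    have hlog : HasDerivAt (fun y => Real.log (g y)) (p * Real.exp x / g x) x :=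
      (hgderiv x).log hne
    have hpoly : HasDerivAt (fun y : ℝ => y * p + y ^ 2 / 8) (p + x / 4) x := by
      have h1 : HasDerivAt (fun y : ℝ => y * p) p x := hasDerivAt_mul_const p
      have h2 : HasDerivAt (fun y : ℝ => y ^ 2 / 8) (x / 4) x := by
        have := (hasDerivAt_pow 2 x).div_const 8
        refine this.congr_deriv ?_
        push_cast
        norm_num
        ring
      exact h1.add h2
    exact hpoly.sub hlog
  -- derivative of f1 is nonnegative on positive reals
  have hf1deriv : ∀ x : ℝ, 0 ≤ x →
      HasDerivAt f1 (1 / 4 - (p * Real.exp x * g x - p * Real.exp x * (p * Real.exp x)) / g x ^ 2) x := by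
    intro x hx
    have hne : g x ≠ 0 := (hgpos x hx).ne'
    have hu : HasDerivAt (fun y => p * Real.exp y) (p * Real.exp x) x :=
      (Real.hasDerivAt_exp x).const_mul p
    have hdiv : HasDerivAt (fun y => p * Real.exp y / g y)
        ((p * Real.exp x * g x - p * Real.exp x * (p * Real.exp x)) / g x ^ 2) x :=
      hu.div (hgderiv x) hne
    have h2 : HasDerivAt (fun y : ℝ => p + y / 4) (1 / 4) x :=
      ((hasDerivAt_id x).div_const 4).const_add p
    exact h2.sub hdiv
  have hf1mono : MonotoneOn f1 (Set.Ici (0 : ℝ)) := by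
    apply monotoneOn_of_deriv_nonneg (convex_Ici 0)
    · intro x hx
      exact (hf1deriv x hx).continuousAt.continuousWithinAt
    · intro x hx
      rw [interior_Ici] at hx
      exact (hf1deriv x hx.le).differentiableAt.differentiableWithinAt
    · intro x hx
      rw [interior_Ici] at hx
      rw [(hf1deriv x hx.le).deriv]
      have hG : 0 < g x := hgpos x hx.le
      rw [sub_nonneg, div_le_iff₀ (by positivity)]
      simp only [hgdef]
      nlinarith [sq_nonneg (1 - p - p * Real.exp x)]
  have hf10 : f1 0 = 0 := by
    simp only [hf1def, hgdef, Real.exp_zero, mul_one]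
    have : 1 - p + p = 1 := by ring
    rw [this]
    simp
  have hf1nonneg : ∀ x : ℝ, 0 ≤ x → 0 ≤ f1 x := by
    intro x hx
    have := hf1mono (Set.self_mem_Ici) hx hx
    rw [hf10] at this
    exact this
  have hfmono : MonotoneOn f (Set.Ici (0 : ℝ)) := by
    apply monotoneOn_of_deriv_nonneg (convex_Ici 0)
    · intro x hx
      exact (hfderiv x hx).continuousAt.continuousWithinAt
    · intro x hx
      rw [interior_Ici] at hx
      exact (hfderiv x hx.le).differentiableAt.differentiableWithinAt
    · intro x hx
      rw [interior_Ici] at hx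
      rw [(hfderiv x hx.le).deriv]
      exact hf1nonneg x hx.le
  have hf0 : f 0 = 0 := by
    simp only [hfdef, hgdef, Real.exp_zero, mul_one]
    have : 1 - p + p = 1 := by ring
    rw [this]
    simp
  have hfs : 0 ≤ f s := by
    have := hfmono (Set.self_mem_Ici) hs hs
    rw [hf0] at this
    exact this
  have hlog : Real.log (g s) ≤ s * p + s ^ 2 / 8 := by
    simp only [hfdef] at hfs
    linarith
  calc g s = Real.exp (Real.log (g s)) := (Real.exp_log (hgpos s hs)).symm
    _ ≤ Real.exp (s * p + s ^ 2 / 8) := Real.exp_le_exp.2 hlog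

/-- One-sided Hoeffding inequality for i.i.d.-type `[0,1]`-valued variables. -/
lemma hoeffding_upper {Ω : Type*} [MeasurableSpace Ω] (P : Measure Ω) [IsProbabilityMeasure P]
    (μ : ℝ) (hμ : μ ∈ Set.Icc (0 : ℝ) 1) (X : ℕ → Ω → ℝ)
    (hmeas : ∀ k, Measurable (X k))
    (hindep : iIndepFun X P)
    (hbdd : ∀ k ω, X k ω ∈ Set.Icc (0 : ℝ) 1)
    (hmean : ∀ k, ∫ ω, X k ω ∂P = μ)
    (n : ℕ) (δ : ℝ) (hδ : 0 < δ) :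
    P {ω | (n : ℝ) * (μ + δ) ≤ ∑ k ∈ Finset.range n, X k ω} ≤
      ENNReal.ofReal (Real.exp (-2 * n * δ ^ 2)) := by
  set s : ℝ := 4 * δ with hsdef
  have hs : 0 < s := by positivity
  have intX : ∀ k, Integrable (X k) P := by
    intro k
    refine (integrable_const (1 : ℝ)).mono' (hmeas k).aestronglyMeasurable ?_
    filter_upwards with ω
    rw [Real.norm_eq_abs, abs_of_nonneg (hbdd k ω).1]
    exact (hbdd k ω).2
  have intexp : ∀ k, Integrable (fun ω => Real.exp (s * X k ω)) P := by
    intro k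
    refine (integrable_const (Real.exp s)).mono' ((hmeas k).const_mul s).exp.aestronglyMeasurable ?_
    filter_upwards with ω
    rw [Real.norm_eq_abs, abs_of_nonneg (Real.exp_nonneg _)]
    exact Real.exp_le_exp.2 (by nlinarith [(hbdd k ω).1, (hbdd k ω).2])
  -- per-variable mgf bound
  have key : ∀ k, mgf (X k) P s ≤ Real.exp (s * μ + s ^ 2 / 8) := by
    intro k
    have hpt : ∀ ω, Real.exp (s * X k ω) ≤ 1 + (Real.exp s - 1) * X k ω := by
      intro ω
      have hx := hbdd k ω
      have h := convexOn_exp.2 (Set.mem_univ (0 : ℝ)) (Set.mem_univ s)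
        (sub_nonneg.2 hx.2) hx.1 (by ring)
      simp only [smul_eq_mul, mul_zero, zero_add, Real.exp_zero, mul_one] at h
      calc Real.exp (s * X k ω) = Real.exp (X k ω * s) := by rw [mul_comm]
        _ ≤ (1 - X k ω) + X k ω * Real.exp s := h
        _ = 1 + (Real.exp s - 1) * X k ω := by ring
    have hint : ∫ ω, (1 + (Real.exp s - 1) * X k ω) ∂P = 1 + (Real.exp s - 1) * μ := by
      rw [integral_add (integrable_const 1) ((intX k).const_mul _), integral_const,
        integral_const_mul, hmean k]
      simp
    calc mgf (X k) P s = ∫ ω, Real.exp (s * X k ω) ∂P := rfl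
      _ ≤ ∫ ω, (1 + (Real.exp s - 1) * X k ω) ∂P := by
          refine integral_mono (intexp k) ?_ hpt
          exact (integrable_const 1).add ((intX k).const_mul _)
      _ = 1 + (Real.exp s - 1) * μ := hint
      _ = 1 - μ + μ * Real.exp s := by ring
      _ ≤ Real.exp (s * μ + s ^ 2 / 8) := hoeff_analytic hμ.1 hμ.2 hs.le
  have int_sum : Integrable (fun ω => Real.exp (s * (∑ k ∈ Finset.range n, X k) ω)) P :=
    hindep.integrable_exp_mul_sum hmeas (fun i _ => intexp i)
  have chern := measure_ge_le_exp_mul_mgf (μ := P) (X := ∑ k ∈ Finset.range n, X k)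
    (ε := (n : ℝ) * (μ + δ)) hs.le int_sum
  have hmgf : mgf (∑ k ∈ Finset.range n, X k) P s ≤ Real.exp ((n : ℝ) * (s * μ + s ^ 2 / 8)) := by
    rw [hindep.mgf_sum hmeas (Finset.range n)]
    calc ∏ k ∈ Finset.range n, mgf (X k) P s
        ≤ ∏ _k ∈ Finset.range n, Real.exp (s * μ + s ^ 2 / 8) :=
          Finset.prod_le_prod (fun i _ => mgf_nonneg) (fun i _ => key i)
      _ = Real.exp (s * μ + s ^ 2 / 8) ^ n := by rw [Finset.prod_const, Finset.card_range]
      _ = Real.exp ((n : ℝ) * (s * μ + s ^ 2 / 8)) := (Real.exp_nat_mul _ n).symm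
  have hfinal : (P {ω | (n : ℝ) * (μ + δ) ≤ (∑ k ∈ Finset.range n, X k) ω}).toReal ≤
      Real.exp (-2 * n * δ ^ 2) := by
    calc (P {ω | (n : ℝ) * (μ + δ) ≤ (∑ k ∈ Finset.range n, X k) ω}).toReal
        ≤ Real.exp (-s * ((n : ℝ) * (μ + δ))) * mgf (∑ k ∈ Finset.range n, X k) P s := chern
      _ ≤ Real.exp (-s * ((n : ℝ) * (μ + δ))) * Real.exp ((n : ℝ) * (s * μ + s ^ 2 / 8)) := by
          exact mul_le_mul_of_nonneg_left hmgf (Real.exp_nonneg _)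
      _ = Real.exp (-2 * n * δ ^ 2) := by
          rw [← Real.exp_add]
          congr 1
          rw [hsdef]
          ring
  have hset : {ω | (n : ℝ) * (μ + δ) ≤ ∑ k ∈ Finset.range n, X k ω} =
      {ω | (n : ℝ) * (μ + δ) ≤ (∑ k ∈ Finset.range n, X k) ω} := by
    simp [Finset.sum_apply]
  rw [hset, ← ENNReal.ofReal_toReal (measure_ne_top P _)]
  exact ENNReal.ofReal_le_ofReal hfinal

/-- Two-sided Hoeffding inequality for the sample mean. -/
lemma hoeffding_two {Ω : Type*} [MeasurableSpace Ω] (P : Measure Ω) [IsProbabilityMeasure P]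
    (μ : ℝ) (hμ : μ ∈ Set.Icc (0 : ℝ) 1) (X : ℕ → Ω → ℝ)
    (hmeas : ∀ k, Measurable (X k))
    (hindep : iIndepFun X P)
    (hbdd : ∀ k ω, X k ω ∈ Set.Icc (0 : ℝ) 1)
    (hmean : ∀ k, ∫ ω, X k ω ∂P = μ)
    (n : ℕ) (hn : 1 ≤ n) (δ : ℝ) (hδ : 0 < δ) :
    P {ω | δ ≤ |(∑ k ∈ Finset.range n, X k ω) / (n : ℝ) - μ|} ≤
      ENNReal.ofReal (2 * Real.exp (-2 * n * δ ^ 2)) := by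
  set Y : ℕ → Ω → ℝ := fun k ω => 1 - X k ω with hYdef
  have hmeasY : ∀ k, Measurable (Y k) := fun k => measurable_const.sub (hmeas k)
  have hindepY : iIndepFun Y P :=
    hindep.comp (fun _ => fun x : ℝ => 1 - x) (fun _ => measurable_const.sub measurable_id)
  have hbddY : ∀ k ω, Y k ω ∈ Set.Icc (0 : ℝ) 1 := by
    intro k ω
    have := hbdd k ω
    exact ⟨by simp only [hYdef]; linarith [this.2], by simp only [hYdef]; linarith [this.1]⟩
  have hmeanY : ∀ k, ∫ ω, Y k ω ∂P = 1 - μ := by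
    intro k
    have intX : Integrable (X k) P := by
      refine (integrable_const (1 : ℝ)).mono' (hmeas k).aestronglyMeasurable ?_
      filter_upwards with ω
      rw [Real.norm_eq_abs, abs_of_nonneg (hbdd k ω).1]
      exact (hbdd k ω).2
    simp only [hYdef]
    rw [integral_sub (integrable_const 1) intX, integral_const, hmean k]
    simp
  have hμY : 1 - μ ∈ Set.Icc (0 : ℝ) 1 := ⟨by linarith [hμ.2], by linarith [hμ.1]⟩
  have hn' : (0 : ℝ) < n := by exact_mod_cast hn
  have hup := hoeffding_upper P μ hμ X hmeas hindep hbdd hmean n δ hδ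
  have hlo := hoeffding_upper P (1 - μ) hμY Y hmeasY hindepY hbddY hmeanY n δ hδ
  have hsub : {ω | δ ≤ |(∑ k ∈ Finset.range n, X k ω) / (n : ℝ) - μ|} ⊆
      {ω | (n : ℝ) * (μ + δ) ≤ ∑ k ∈ Finset.range n, X k ω} ∪
      {ω | (n : ℝ) * ((1 - μ) + δ) ≤ ∑ k ∈ Finset.range n, Y k ω} := by
    intro ω hω
    simp only [Set.mem_setOf_eq] at hω
    have hYsum : ∑ k ∈ Finset.range n, Y k ω = (n : ℝ) - ∑ k ∈ Finset.range n, X k ω := by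
      simp only [hYdef]
      rw [Finset.sum_sub_distrib, Finset.sum_const, Finset.card_range]
      simp
    rcases le_abs.1 hω with h | h
    · left
      simp only [Set.mem_setOf_eq]
      have := (le_div_iff₀ hn').1 (by linarith : μ + δ ≤ (∑ k ∈ Finset.range n, X k ω) / (n : ℝ))
      linarith [this]
    · right
      simp only [Set.mem_setOf_eq, hYsum]
      have h2 : (∑ k ∈ Finset.range n, X k ω) / (n : ℝ) ≤ μ - δ := by linarith
      have := (div_le_iff₀ hn').1 h2
      nlinarith
  calc P {ω | δ ≤ |(∑ k ∈ Finset.range n, X k ω) / (n : ℝ) - μ|}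
      ≤ P ({ω | (n : ℝ) * (μ + δ) ≤ ∑ k ∈ Finset.range n, X k ω} ∪
        {ω | (n : ℝ) * ((1 - μ) + δ) ≤ ∑ k ∈ Finset.range n, Y k ω}) := measure_mono hsub
    _ ≤ P {ω | (n : ℝ) * (μ + δ) ≤ ∑ k ∈ Finset.range n, X k ω} +
        P {ω | (n : ℝ) * ((1 - μ) + δ) ≤ ∑ k ∈ Finset.range n, Y k ω} := measure_union_le _ _
    _ ≤ ENNReal.ofReal (Real.exp (-2 * n * δ ^ 2)) + ENNReal.ofReal (Real.exp (-2 * n * δ ^ 2)) :=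
        add_le_add hup hlo
    _ = ENNReal.ofReal (2 * Real.exp (-2 * n * δ ^ 2)) := by
        rw [← ENNReal.ofReal_add (Real.exp_nonneg _) (Real.exp_nonneg _)]
        congr 1
        ring

/-- Let `X₀, X₁, …` be i.i.d. `[0,1]`-valued with mean `μ`, and let `N ∈ {0,…,t}`
be independent of the sequence, with `Pr(N ≤ η p* t) ≤ 1/t²`. Let `μ̂` be the sample mean of
the first `N` observations (`μ̂ = 1` if `N = 0`). Then
`Pr(|μ̂ - μ| ≥ δ) ≤ 2/(t²(1 - e^{-2δ²})) + 2 e^{-2δ² η p* t}`. -/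
theorem stmt6 {Ω : Type*} [MeasurableSpace Ω] (P : Measure Ω) [IsProbabilityMeasure P]
    (μ : ℝ) (hμ : μ ∈ Set.Icc (0 : ℝ) 1)
    (X : ℕ → Ω → ℝ)
    (hmeas : ∀ k, Measurable (X k))
    (hindep : iIndepFun X P)
    (hident : ∀ k, IdentDistrib (X k) (X 0) P P)
    (hbdd : ∀ k ω, X k ω ∈ Set.Icc (0 : ℝ) 1)
    (hmean : ∀ k, ∫ ω, X k ω ∂P = μ)
    (t : ℕ) (ht : 1 ≤ t)
    (N : Ω → ℕ) (hN : Measurable N) (hNle : ∀ ω, N ω ≤ t)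
    (hNindep : IndepFun N (fun ω => fun k => X k ω) P)
    (δ η pstar : ℝ) (hδ : 0 < δ) (hη : η ∈ Set.Ioo (0 : ℝ) 1) (hp : pstar ∈ Set.Ioc (0 : ℝ) 1)
    (hNtail : P {ω | (N ω : ℝ) ≤ η * pstar * t} ≤ ENNReal.ofReal (1 / (t : ℝ) ^ 2)) :
    P {ω | δ ≤ |(if N ω = 0 then (1 : ℝ) else
          (∑ k ∈ Finset.range (N ω), X k ω) / (N ω : ℝ)) - μ|} ≤
      ENNReal.ofReal (2 / ((t : ℝ) ^ 2 * (1 - Real.exp (-2 * δ ^ 2))) +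
        2 * Real.exp (-2 * δ ^ 2 * η * pstar * t)) := by
  classical
  have ht' : (0 : ℝ) < t := by exact_mod_cast ht
  have hc : (0 : ℝ) < η * pstar * t := by
    have := hη.1; have := hp.1; positivity
  set c : ℝ := η * pstar * t with hcdef
  set E2 : ℝ := Real.exp (-2 * δ ^ 2 * η * pstar * t) with hE2def
  set A : ℕ → Set Ω := fun n => {ω | δ ≤ |(if n = 0 then (1 : ℝ) else
      (∑ k ∈ Finset.range n, X k ω) / (n : ℝ)) - μ|} with hAdef
  -- cover the bad event
  have hcover : {ω | δ ≤ |(if N ω = 0 then (1 : ℝ) else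
      (∑ k ∈ Finset.range (N ω), X k ω) / (N ω : ℝ)) - μ|} ⊆
      ⋃ n ∈ Finset.range (t + 1), (N ⁻¹' {n} ∩ A n) := by
    intro ω hω
    exact Set.mem_iUnion.2 ⟨N ω, Set.mem_iUnion.2
      ⟨Finset.mem_range.2 (Nat.lt_succ_of_le (hNle ω)), ⟨rfl, hω⟩⟩⟩
  have hstep1 : P {ω | δ ≤ |(if N ω = 0 then (1 : ℝ) else
      (∑ k ∈ Finset.range (N ω), X k ω) / (N ω : ℝ)) - μ|} ≤
      ∑ n ∈ Finset.range (t + 1), P (N ⁻¹' {n} ∩ A n) :=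
    (measure_mono hcover).trans (measure_biUnion_finset_le _ _)
  set S₁ : Finset ℕ := (Finset.range (t + 1)).filter (fun n => (n : ℝ) ≤ c) with hS1def
  set S₂ : Finset ℕ := (Finset.range (t + 1)).filter (fun n => ¬((n : ℝ) ≤ c)) with hS2def
  have hNdisj : ∀ (S : Finset ℕ), (↑S : Set ℕ).PairwiseDisjoint (fun n => N ⁻¹' {n}) := by
    intro S i _ j _ hij
    rw [Function.onFun, Set.disjoint_left]
    rintro ω hi hj
    exact hij ((Set.mem_preimage.1 hi).symm.trans (Set.mem_preimage.1 hj))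
  have hNmeas : ∀ n : ℕ, MeasurableSet (N ⁻¹' {n}) := fun n => hN (measurableSet_singleton n)
  -- bound on S₁
  have hb1 : ∑ n ∈ S₁, P (N ⁻¹' {n} ∩ A n) ≤ ENNReal.ofReal (1 / (t : ℝ) ^ 2) := by
    calc ∑ n ∈ S₁, P (N ⁻¹' {n} ∩ A n) ≤ ∑ n ∈ S₁, P (N ⁻¹' {n}) :=
          Finset.sum_le_sum (fun n _ => measure_mono Set.inter_subset_left)
      _ = P (⋃ n ∈ S₁, N ⁻¹' {n}) :=
          (measure_biUnion_finset (hNdisj S₁) (fun n _ => hNmeas n)).symm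
      _ ≤ P {ω | (N ω : ℝ) ≤ c} := by
          refine measure_mono ?_
          intro ω hω
          simp only [Set.mem_iUnion] at hω
          obtain ⟨n, hn, hωn⟩ := hω
          have hNn : N ω = n := Set.mem_preimage.1 hωn
          rw [hS1def] at hn
          have hnc : (n : ℝ) ≤ c := by simpa using (Finset.mem_filter.1 hn).2
          show (N ω : ℝ) ≤ c
          rw [hNn]
          exact hnc
      _ ≤ ENNReal.ofReal (1 / (t : ℝ) ^ 2) := hNtail
  -- bound on S₂
  have hb2 : ∑ n ∈ S₂, P (N ⁻¹' {n} ∩ A n) ≤ ENNReal.ofReal (2 * E2) := by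
    have hterm : ∀ n ∈ S₂, P (N ⁻¹' {n} ∩ A n) ≤ P (N ⁻¹' {n}) * ENNReal.ofReal (2 * E2) := by
      intro n hn
      rw [hS2def] at hn
      have hnc : c < (n : ℝ) := not_le.1 (Finset.mem_filter.1 hn).2
      have hn0 : n ≠ 0 := by
        intro h
        rw [h] at hnc
        exact absurd hnc (by simpa using hc.le)
      have hn1 : 1 ≤ n := Nat.one_le_iff_ne_zero.2 hn0
      set B : Set (ℕ → ℝ) := {v | δ ≤ |(∑ k ∈ Finset.range n, v k) / (n : ℝ) - μ|} with hBdef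
      have hBmeas : MeasurableSet B := by
        refine measurableSet_le measurable_const ?_
        exact (((Finset.measurable_sum (Finset.range n)
          (fun k _ => measurable_pi_apply k)).div_const _).sub measurable_const).abs
      have hA : A n = (fun ω => fun k => X k ω) ⁻¹' B := by
        ext ω
        simp [hAdef, hBdef, hn0]
      have hsplit : P (N ⁻¹' {n} ∩ A n) = P (N ⁻¹' {n}) * P (A n) := by
        rw [hA]
        exact hNindep.measure_inter_preimage_eq_mul {n} B (measurableSet_singleton n) hBmeas
      have hPA : P (A n) ≤ ENNReal.ofReal (2 * E2) := by
        have h2 := hoeffding_two P μ hμ X hmeas hindep hbdd hmean n hn1 δ hδ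
        have hAeq : A n = {ω | δ ≤ |(∑ k ∈ Finset.range n, X k ω) / (n : ℝ) - μ|} := by
          ext ω; simp [hAdef, hn0]
        rw [hAeq]
        refine h2.trans (ENNReal.ofReal_le_ofReal ?_)
        have hexp : Real.exp (-2 * n * δ ^ 2) ≤ E2 := by
          rw [hE2def]
          refine Real.exp_le_exp.2 ?_
          have h2δ : (0 : ℝ) ≤ 2 * δ ^ 2 := by positivity
          nlinarith [mul_le_mul_of_nonneg_left hnc.le h2δ]
        nlinarith [Real.exp_nonneg (-2 * (n : ℝ) * δ ^ 2)]
      rw [hsplit]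
      exact mul_le_mul_right hPA _
    calc ∑ n ∈ S₂, P (N ⁻¹' {n} ∩ A n) ≤ ∑ n ∈ S₂, P (N ⁻¹' {n}) * ENNReal.ofReal (2 * E2) :=
          Finset.sum_le_sum hterm
      _ = (∑ n ∈ S₂, P (N ⁻¹' {n})) * ENNReal.ofReal (2 * E2) := (Finset.sum_mul _ _ _).symm
      _ ≤ 1 * ENNReal.ofReal (2 * E2) := by
          refine mul_le_mul_left ?_ _
          rw [← measure_biUnion_finset (hNdisj S₂) (fun n _ => hNmeas n)]
          exact (measure_mono (Set.subset_univ _)).trans (le_of_eq measure_univ)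
      _ = ENNReal.ofReal (2 * E2) := one_mul _
  -- combine
  have hq : Real.exp (-2 * δ ^ 2) < 1 := by
    rw [← Real.exp_zero]
    exact Real.exp_lt_exp.2 (by nlinarith)
  have hsum : ∑ n ∈ Finset.range (t + 1), P (N ⁻¹' {n} ∩ A n) =
      ∑ n ∈ S₁, P (N ⁻¹' {n} ∩ A n) + ∑ n ∈ S₂, P (N ⁻¹' {n} ∩ A n) :=
    (Finset.sum_filter_add_sum_filter_not _ _ _).symm
  refine hstep1.trans ?_
  rw [hsum]
  refine (add_le_add hb1 hb2).trans ?_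
  rw [← ENNReal.ofReal_add (by positivity) (by positivity)]
  refine ENNReal.ofReal_le_ofReal ?_
  have h1 : 1 / (t : ℝ) ^ 2 ≤ 2 / ((t : ℝ) ^ 2 * (1 - Real.exp (-2 * δ ^ 2))) := by
    have hq' : (0 : ℝ) < 1 - Real.exp (-2 * δ ^ 2) := sub_pos.2 hq
    rw [div_le_div_iff₀ (by positivity) (mul_pos (by positivity) hq')]
    nlinarith [Real.exp_pos (-2 * δ ^ 2), sq_nonneg (t : ℝ)]
  rw [hE2def]
  linarith
end

section
/- Let 𝒮 be a finite nonempty set, m ≥ 1 a natural number, and for each vector μ ∈ [0,1]^m let r_μ : 𝒮 → ℝ be a function. Assume bounded smoothness: there is a continuous, strictly increasing function f : [0,∞) → [0,∞) with f(0) = 0 such that for all μ, μ' ∈ [0,1]^m, all Δ > 0, and all S ∈ 𝒮, if max_{i∈{1,…,m}} |μ_i - μ'_i| ≤ Δ then |r_μ(S) - r_{μ'}(S)| ≤ f(Δ). Let α ∈ (0,1], let μ, μ̂ ∈ [0,1]^m, and set Δ = max_{i} |μ_i - μ̂_i|. If S ∈ 𝒮 satisfies r_{μ̂}(S) ≥ α·max_{S'∈𝒮}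 r_{μ̂}(S'), then r_μ(S) ≥ α·max_{S'∈𝒮} r_μ(S') - 2·f(Δ). -/
/-- Under the bounded-smoothness assumption, if `S` is an `α`-approximate
maximizer of `r_μ̂`, then `r_μ(S) ≥ α·max_{S'} r_μ(S') - 2 f(Δ)` where
`Δ = max_i |μ_i - μ̂_i|`. -/
theorem stmt7 {S : Type*} [Fintype S] [Nonempty S] {m : ℕ} (hm : 1 ≤ m)
    (r : (Fin m → ℝ) → S → ℝ) (f : ℝ → ℝ)
    (hf_cont : ContinuousOn f (Set.Ici 0))
    (hf_mono : StrictMonoOn f (Set.Ici 0))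
    (hf0 : f 0 = 0)
    (hsmooth : ∀ μ μ' : Fin m → ℝ,
      (∀ i, μ i ∈ Set.Icc (0 : ℝ) 1) → (∀ i, μ' i ∈ Set.Icc (0 : ℝ) 1) →
      ∀ Δ : ℝ, 0 < Δ → (∀ i, |μ i - μ' i| ≤ Δ) → ∀ s : S, |r μ s - r μ' s| ≤ f Δ)
    (α : ℝ) (hα : α ∈ Set.Ioc (0 : ℝ) 1)
    (μ μhat : Fin m → ℝ)
    (hμ : ∀ i, μ i ∈ Set.Icc (0 : ℝ) 1) (hμhat : ∀ i, μhat i ∈ Set.Icc (0 : ℝ) 1)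
    (Δ : ℝ) (hΔ : IsGreatest (Set.range fun i => |μ i - μhat i|) Δ)
    (rstar rstarhat : ℝ)
    (hrstar : IsGreatest (Set.range (r μ)) rstar)
    (hrstarhat : IsGreatest (Set.range (r μhat)) rstarhat)
    (s : S) (hs : α * rstarhat ≤ r μhat s) :
    α * rstar - 2 * f Δ ≤ r μ s := by
  obtain ⟨i0, hi0⟩ := hΔ.1
  have hΔ0 : 0 ≤ Δ := hi0 ▸ abs_nonneg _
  have hle : ∀ i, |μ i - μhat i| ≤ Δ := fun i => hΔ.2 ⟨i, rfl⟩
  rcases eq_or_lt_of_le hΔ0 with h0 | hpos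
  · -- Δ = 0, so μ = μhat
    have hμeq : μ = μhat := by
      funext i
      have := hle i
      rw [← h0] at this
      have := abs_nonpos_iff.mp this
      linarith [sub_eq_zero.mp this]
    subst hμeq
    have : rstar = rstarhat := le_antisymm (hrstarhat.2 hrstar.1) (hrstar.2 hrstarhat.1)
    rw [← h0, hf0, this]
    linarith
  · have hsm := hsmooth μ μhat hμ hμhat Δ hpos hle
    have hfΔ : 0 ≤ f Δ := by
      have := hf_mono.monotoneOn (Set.self_mem_Ici) (Set.mem_Ici.mpr hΔ0) hΔ0
      linarith [this]
    obtain ⟨sstar, hsstar⟩ := hrstar.1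
    have h1 : rstar - f Δ ≤ rstarhat := by
      have := abs_le.mp (hsm sstar)
      have h2 : r μhat sstar ≤ rstarhat := hrstarhat.2 ⟨sstar, rfl⟩
      linarith
    have h3 := abs_le.mp (hsm s)
    nlinarith [hα.1, hα.2]
end

section
/- Let 𝒮 be a finite nonempty set, m ≥ 1, and for each μ ∈ [0,1]^m let r_μ : 𝒮 → ℝ satisfy bounded smoothness with respect to a continuous, strictly increasing function f : [0,∞) → [0,∞) with f(0) = 0 (i.e., for all μ, μ' ∈ [0,1]^m, Δ > 0, S ∈ 𝒮: max_i |μ_i - μ'_i| ≤ Δ implies |r_μ(S) - r_{μ'}(S)| ≤ f(Δ)). Let α ∈ (0,1], μ ∈ [0,1]^m, and r*_μ = max_{S∈𝒮} r_μ(S). Call S bad if r_μ(S) < α·r*_μ, and suppose there exists at least one bad action; let ∇_min = α·r*_μ - max{ r_μ(S) : S bad } > 0. Let μ̂ ∈ [0,1]^m with Δ = max_i |μ_i - μ̂_i| satisfying 2·f(Δ) < ∇_min. Then every S ∈ 𝒮 with r_{μ̂}(S) ≥ α·max_{S'∈𝒮} r_{μ̂}(S') satisfies r_μ(S) ≥ α·r*_μ;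 i.e., no bad action is an α-approximate maximizer under μ̂. -/
/-- Under bounded smoothness, if `2 f(Δ) < ∇_min` (the minimum gap of the bad
actions), then no bad action is an `α`-approximate maximizer under the estimate `μ̂`:
every `α`-approximate maximizer `S` of `r_μ̂` satisfies `r_μ(S) ≥ α r*_μ`. -/
theorem stmt8 {S : Type*} [Fintype S] [Nonempty S] {m : ℕ} (hm : 1 ≤ m)
    (r : (Fin m → ℝ) → S → ℝ) (f : ℝ → ℝ)
    (hf_cont : ContinuousOn f (Set.Ici 0))
    (hf_mono : StrictMonoOn f (Set.Ici 0))
    (hf0 : f 0 = 0)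
    (hsmooth : ∀ μ μ' : Fin m → ℝ,
      (∀ i, μ i ∈ Set.Icc (0 : ℝ) 1) → (∀ i, μ' i ∈ Set.Icc (0 : ℝ) 1) →
      ∀ Δ : ℝ, 0 < Δ → (∀ i, |μ i - μ' i| ≤ Δ) → ∀ s : S, |r μ s - r μ' s| ≤ f Δ)
    (α : ℝ) (hα : α ∈ Set.Ioc (0 : ℝ) 1)
    (μ : Fin m → ℝ) (hμ : ∀ i, μ i ∈ Set.Icc (0 : ℝ) 1)
    (rstar : ℝ) (hrstar : IsGreatest (Set.range (r μ)) rstar)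
    (gmin : ℝ)
    (hgmin : IsLeast {g : ℝ | ∃ s : S, r μ s < α * rstar ∧ g = α * rstar - r μ s} gmin)
    (μhat : Fin m → ℝ) (hμhat : ∀ i, μhat i ∈ Set.Icc (0 : ℝ) 1)
    (Δ : ℝ) (hΔ : IsGreatest (Set.range fun i => |μ i - μhat i|) Δ)
    (hgap : 2 * f Δ < gmin)
    (rstarhat : ℝ) (hrstarhat : IsGreatest (Set.range (r μhat)) rstarhat) :
    ∀ s : S, α * rstarhat ≤ r μhat s → α * rstar ≤ r μ s := by

  -- Δ ≥ 0
  have i0 : Fin m := ⟨0, hm⟩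
  have hΔ0 : 0 ≤ Δ := le_trans (abs_nonneg _) (hΔ.2 ⟨i0, rfl⟩)
  -- key smoothness bound
  have key : ∀ s : S, |r μ s - r μhat s| ≤ f Δ := by
    rcases eq_or_lt_of_le hΔ0 with h0 | hpos
    · have hμeq : μ = μhat := by
        funext i
        have := hΔ.2 (Set.mem_range_self i)
        rw [← h0] at this
        have := abs_nonpos_iff.mp (le_of_le_of_eq this (by linarith))
        linarith [sub_eq_zero.mp this]
      intro s
      rw [hμeq, sub_self, abs_zero, ← h0, hf0]
    · exact hsmooth μ μhat hμ hμhat Δ hpos (fun i => hΔ.2 (Set.mem_range_self i))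
  have hfΔ : 0 ≤ f Δ := by
    rcases eq_or_lt_of_le hΔ0 with h0 | hpos
    · rw [← h0, hf0]
    · rw [← hf0]; exact (hf_mono (Set.mem_Ici.mpr le_rfl) (le_of_lt hpos) hpos).le
  intro s hs
  by_contra hbad
  push_neg at hbad
  have hgm : gmin ≤ α * rstar - r μ s := hgmin.2 ⟨s, hbad, rfl⟩
  -- r μhat of optimal action
  obtain ⟨⟨s0, hs0⟩, _⟩ := hrstar
  have h1 : rstar - f Δ ≤ r μhat s0 := by
    have := key s0; rw [hs0] at this
    have := abs_le.mp this
    linarith [this.1]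
  have h2 : rstar - f Δ ≤ rstarhat := le_trans h1 (hrstarhat.2 ⟨s0, rfl⟩)
  have h3 : α * rstar - f Δ ≤ α * rstarhat := by nlinarith [hα.1, hα.2]
  have h4 : |r μ s - r μhat s| ≤ f Δ := key s
  have := abs_le.mp h4
  linarith [this.1, this.2]
end

section
/- Let n ≥ 1 be a natural number, p ∈ [0,1], and δ ≥ 0. Let B' be a random variable with the Binomial(n+1, p) distribution. Then Pr(B' > n·p + n·δ) ≤ e^{4δ - 2nδ²}, i.e., 1 - F^Binom_{n+1,p}(np + nδ) ≤ e^{4δ - 2nδ²}. -/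
open MeasureTheory

/-- Pointwise Hoeffding lemma for a Bernoulli mgf. -/
lemma hoeffding_pt {p : ℝ} (hp0 : 0 ≤ p) (hp1 : p ≤ 1) {t : ℝ} (ht : 0 ≤ t) :
    (1 - p) + p * Real.exp t ≤ Real.exp (p * t + t ^ 2 / 8) := by
  have hD : ∀ x : ℝ, 0 < 1 - p + p * Real.exp x := by
    intro x
    rcases eq_or_lt_of_le hp0 with h | h
    · rw [← h]; norm_num
    · have := mul_pos h (Real.exp_pos x); linarith
  set g1 : ℝ → ℝ := fun x => p + x / 4 - p * Real.exp x / (1 - p + p * Real.exp x) with hg1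
  have hderiv1 : ∀ x : ℝ, HasDerivAt g1
      (1 / 4 - (1 - p) * (p * Real.exp x) / (1 - p + p * Real.exp x) ^ 2) x := by
    intro x
    have hnum : HasDerivAt (fun x : ℝ => p * Real.exp x) (p * Real.exp x) x :=
      (Real.hasDerivAt_exp x).const_mul p
    have hden : HasDerivAt (fun x : ℝ => 1 - p + p * Real.exp x) (p * Real.exp x) x :=
      hnum.const_add (1 - p)
    have hq := hnum.div hden (hD x).ne'
    have hlin : HasDerivAt (fun x : ℝ => p + x / 4) (1 / 4) x := by
      simpa using ((hasDerivAt_id x).div_const 4).const_add p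
    have := hlin.sub hq
    refine this.congr_deriv ?_
    ring
  have hmono1 : Monotone g1 := by
    apply monotone_of_hasDerivAt_nonneg hderiv1
    intro x
    have hDx := hD x
    have h4 : (1 - p) * (p * Real.exp x) * 4 ≤ (1 - p + p * Real.exp x) ^ 2 := by
      nlinarith [sq_nonneg ((1 - p) - p * Real.exp x)]
    have hsq : 0 < (1 - p + p * Real.exp x) ^ 2 := by positivity
    have : (1 - p) * (p * Real.exp x) / (1 - p + p * Real.exp x) ^ 2 ≤ 1 / 4 := by
      rw [div_le_iff₀ hsq]; linarith
    simp only [Pi.zero_apply]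
    linarith
  have hg10 : g1 0 = 0 := by
    simp [hg1, Real.exp_zero]
  set g : ℝ → ℝ := fun x => p * x + x ^ 2 / 8 - Real.log (1 - p + p * Real.exp x) with hg
  have hderivg : ∀ x : ℝ, HasDerivAt g (g1 x) x := by
    intro x
    have hnum : HasDerivAt (fun x : ℝ => p * Real.exp x) (p * Real.exp x) x :=
      (Real.hasDerivAt_exp x).const_mul p
    have hden : HasDerivAt (fun x : ℝ => 1 - p + p * Real.exp x) (p * Real.exp x) x :=
      hnum.const_add (1 - p)
    have hlog : HasDerivAt (fun x : ℝ => Real.log (1 - p + p * Real.exp x))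
        (p * Real.exp x / (1 - p + p * Real.exp x)) x := by
      exact hden.log (hD x).ne'
    have hpoly : HasDerivAt (fun x : ℝ => p * x + x ^ 2 / 8) (p + x / 4) x := by
      have h1 : HasDerivAt (fun x : ℝ => p * x) p x := by
        simpa using (hasDerivAt_id x).const_mul p
      have h2 : HasDerivAt (fun x : ℝ => x ^ 2 / 8) (x / 4) x := by
        have := ((hasDerivAt_pow 2 x).div_const 8)
        refine this.congr_deriv ?_
        norm_num
        ring
      exact h1.add h2
    have := hpoly.sub hlog
    exact this
  have hmonog : MonotoneOn g (Set.Ici (0 : ℝ)) := by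
    apply monotoneOn_of_deriv_nonneg (convex_Ici 0)
    · exact (fun x _ => ((hderivg x).differentiableAt).continuousAt.continuousWithinAt)
    · exact fun x _ => ((hderivg x).differentiableAt).differentiableWithinAt
    · intro x hx
      rw [(hderivg x).deriv, ← hg10]
      rw [interior_Ici] at hx
      exact hmono1 (le_of_lt hx)
  have hg0 : g 0 = 0 := by
    simp [hg, Real.exp_zero]
  have hgt : 0 ≤ g t := by
    rw [← hg0]
    exact hmonog Set.self_mem_Ici ht ht
  have hlog_le : Real.log (1 - p + p * Real.exp t) ≤ p * t + t ^ 2 / 8 := by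
    have hgt' : 0 ≤ p * t + t ^ 2 / 8 - Real.log (1 - p + p * Real.exp t) := hgt
    linarith
  calc (1 - p) + p * Real.exp t = Real.exp (Real.log (1 - p + p * Real.exp t)) := by
        rw [Real.exp_log (hD t)]
    _ ≤ Real.exp (p * t + t ^ 2 / 8) := Real.exp_le_exp.mpr hlog_le

/-- The finite-sum (real) version of the tail bound. -/
lemma real_main (n : ℕ) (hn : 1 ≤ n) (p δ : ℝ) (hp0 : 0 ≤ p) (hp1 : p ≤ 1) (hδ : 0 ≤ δ) :
    ∑ k ∈ Finset.range (n + 2),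
      (if (n : ℝ) * p + n * δ < k then ((n + 1).choose k : ℝ) * p ^ k * (1 - p) ^ (n + 1 - k)
        else 0) ≤ Real.exp (4 * δ - 2 * n * δ ^ 2) := by
  have hq0 : (0 : ℝ) ≤ 1 - p := by linarith
  set a : ℝ := (n : ℝ) * p + n * δ with ha
  have hpm : ∀ k : ℕ, 0 ≤ ((n + 1).choose k : ℝ) * p ^ k * (1 - p) ^ (n + 1 - k) := fun k =>
    mul_nonneg (mul_nonneg (Nat.cast_nonneg _) (pow_nonneg hp0 _)) (pow_nonneg hq0 _)
  by_cases hC1 : (n : ℝ) + 1 ≤ a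
  · rw [Finset.sum_eq_zero]
    · positivity
    · intro k hk
      rw [Finset.mem_range] at hk
      have hk' : (k : ℝ) ≤ (n : ℝ) + 1 := by
        have : k ≤ n + 1 := by omega
        exact_mod_cast this
      rw [if_neg (by linarith)]
  push_neg at hC1
  have hsum1 : ∑ k ∈ Finset.range (n + 2),
      ((n + 1).choose k : ℝ) * p ^ k * (1 - p) ^ (n + 1 - k) = 1 := by
    have h := add_pow p (1 - p) (n + 1)
    have h2 : p + (1 - p) = 1 := by ring
    rw [h2, one_pow] at h
    have h3 : ∑ k ∈ Finset.range (n + 2),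
        ((n + 1).choose k : ℝ) * p ^ k * (1 - p) ^ (n + 1 - k)
        = ∑ k ∈ Finset.range (n + 1 + 1), p ^ k * (1 - p) ^ (n + 1 - k) *
          ((n + 1).choose k : ℝ) := Finset.sum_congr rfl fun k _ => by ring
    rw [h3, ← h]
  by_cases hC2 : (n : ℝ) * δ ≤ p
  · calc ∑ k ∈ Finset.range (n + 2),
        (if a < k then ((n + 1).choose k : ℝ) * p ^ k * (1 - p) ^ (n + 1 - k) else 0)
        ≤ ∑ k ∈ Finset.range (n + 2),
          ((n + 1).choose k : ℝ) * p ^ k * (1 - p) ^ (n + 1 - k) := by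
          apply Finset.sum_le_sum
          intro k _
          split_ifs with h
          · exact le_refl _
          · exact hpm k
      _ = 1 := hsum1
      _ ≤ Real.exp (4 * δ - 2 * n * δ ^ 2) := by
          apply Real.one_le_exp
          nlinarith [mul_le_mul_of_nonneg_left hC2 hδ, mul_le_mul_of_nonneg_left hp1 hδ]
  push_neg at hC2
  set s : ℝ := (n : ℝ) * δ - p with hs
  have hspos : 0 < s := by simp [hs]; linarith
  have hm : (0 : ℝ) < (n : ℝ) + 1 := by positivity
  set t : ℝ := 4 * s / ((n : ℝ) + 1) with hts
  have htpos : 0 < t := by positivity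
  have hHoef : p * Real.exp t + (1 - p) ≤ Real.exp (p * t + t ^ 2 / 8) := by
    have := hoeffding_pt hp0 hp1 htpos.le
    linarith
  calc ∑ k ∈ Finset.range (n + 2),
      (if a < k then ((n + 1).choose k : ℝ) * p ^ k * (1 - p) ^ (n + 1 - k) else 0)
      ≤ ∑ k ∈ Finset.range (n + 2),
        ((n + 1).choose k : ℝ) * p ^ k * (1 - p) ^ (n + 1 - k) * Real.exp (t * k)
          * Real.exp (-(t * a)) := by
        apply Finset.sum_le_sum
        intro k _
        split_ifs with h
        · have h1 : (1 : ℝ) ≤ Real.exp (t * k) * Real.exp (-(t * a)) := by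
            rw [← Real.exp_add]
            apply Real.one_le_exp
            have he : t * k + -(t * a) = t * (k - a) := by ring
            rw [he]
            exact mul_nonneg htpos.le (by linarith)
          calc ((n + 1).choose k : ℝ) * p ^ k * (1 - p) ^ (n + 1 - k)
              = ((n + 1).choose k : ℝ) * p ^ k * (1 - p) ^ (n + 1 - k) * 1 := (mul_one _).symm
            _ ≤ ((n + 1).choose k : ℝ) * p ^ k * (1 - p) ^ (n + 1 - k) *
                (Real.exp (t * k) * Real.exp (-(t * a))) :=
                mul_le_mul_of_nonneg_left h1 (hpm k)
            _ = ((n + 1).choose k : ℝ) * p ^ k * (1 - p) ^ (n + 1 - k) * Real.exp (t * k)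
                * Real.exp (-(t * a)) := (mul_assoc _ _ _).symm
        · have := hpm k
          positivity
    _ = (∑ k ∈ Finset.range (n + 2),
          (p * Real.exp t) ^ k * (1 - p) ^ (n + 1 - k) * ((n + 1).choose k : ℝ))
          * Real.exp (-(t * a)) := by
        rw [Finset.sum_mul]
        apply Finset.sum_congr rfl
        intro k _
        rw [mul_pow, mul_comm t (k : ℝ), Real.exp_nat_mul]
        ring
    _ = (p * Real.exp t + (1 - p)) ^ (n + 1) * Real.exp (-(t * a)) := by
        rw [← add_pow]
    _ ≤ (Real.exp (p * t + t ^ 2 / 8)) ^ (n + 1) * Real.exp (-(t * a)) := by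
        apply mul_le_mul_of_nonneg_right _ (Real.exp_pos _).le
        apply pow_le_pow_left₀ _ hHoef
        have := (Real.exp_pos t).le
        nlinarith
    _ = Real.exp (((n : ℝ) + 1) * (p * t + t ^ 2 / 8) + -(t * a)) := by
        rw [← Real.exp_nat_mul, ← Real.exp_add]
        push_cast
        ring_nf
    _ ≤ Real.exp (4 * δ - 2 * n * δ ^ 2) := by
        apply Real.exp_le_exp.mpr
        have key : ((n : ℝ) + 1) * (p * t + t ^ 2 / 8) + -(t * a) = -(2 * s ^ 2) / ((n : ℝ) + 1) := by
          rw [hts, ha, hs]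
          field_simp
          ring
        rw [key, div_le_iff₀ hm]
        have hgap : (0 : ℝ) ≤ (n : ℝ) + 1 - a := by linarith
        have h1 : 0 ≤ δ * ((n : ℝ) + 1 - a) := mul_nonneg hδ hgap
        rw [ha] at h1
        nlinarith [sq_nonneg p, mul_nonneg (Nat.cast_nonneg (α := ℝ) n) (sq_nonneg δ)]

/-- If `B' ~ Binomial(n+1,p)` then `Pr(B' > np + nδ) ≤ e^{4δ - 2nδ²}`. -/
theorem stmt10 {Ω : Type*} [MeasurableSpace Ω] (P : Measure Ω) [IsProbabilityMeasure P]
    (n : ℕ) (hn : 1 ≤ n) (p δ : ℝ) (hp : p ∈ Set.Icc (0 : ℝ) 1) (hδ : 0 ≤ δ)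
    (B' : Ω → ℕ) (hB' : Measurable B')
    (hlaw : ∀ k : ℕ,
      P {ω | B' ω = k} =
        ENNReal.ofReal (((n + 1).choose k : ℝ) * p ^ k * (1 - p) ^ (n + 1 - k))) :
    P {ω | n * p + n * δ < (B' ω : ℝ)} ≤
      ENNReal.ofReal (Real.exp (4 * δ - 2 * n * δ ^ 2)) := by
  obtain ⟨hp0, hp1⟩ := hp
  have hq0 : (0 : ℝ) ≤ 1 - p := by linarith
  set a : ℝ := (n : ℝ) * p + n * δ with ha
  set f : ℕ → ℝ := fun k =>
    if a < k then ((n + 1).choose k : ℝ) * p ^ k * (1 - p) ^ (n + 1 - k) else 0 with hf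
  have hfnn : ∀ k, 0 ≤ f k := by
    intro k
    simp only [hf]
    split_ifs with h
    · exact mul_nonneg (mul_nonneg (Nat.cast_nonneg _) (pow_nonneg hp0 _)) (pow_nonneg hq0 _)
    · exact le_refl 0
  set s : ℕ → Set Ω := fun k => if a < (k : ℝ) then B' ⁻¹' {k} else ∅ with hsdef
  have hsub : ∀ k, s k ⊆ B' ⁻¹' {k} := by
    intro k
    simp only [hsdef]
    split_ifs
    · exact subset_rfl
    · exact Set.empty_subset _
  have hmeas : ∀ k, MeasurableSet (s k) := by
    intro k
    simp only [hsdef]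
    split_ifs
    · exact hB' (measurableSet_singleton k)
    · exact MeasurableSet.empty
  have hdisj : Pairwise (Function.onFun Disjoint s) := by
    intro i j hij
    apply Set.disjoint_of_subset (hsub i) (hsub j)
    apply Set.disjoint_left.mpr
    intro ω hi hj
    exact hij (by simp at hi hj; rw [← hi, ← hj])
  have hunion : {ω | a < (B' ω : ℝ)} = ⋃ k, s k := by
    ext ω
    simp only [Set.mem_setOf_eq, Set.mem_iUnion, hsdef]
    constructor
    · intro h
      exact ⟨B' ω, by rw [if_pos h]; simp⟩
    · rintro ⟨k, hk⟩
      by_cases h : a < (k : ℝ)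
      · rw [if_pos h] at hk
        simp at hk
        rw [hk]; exact h
      · rw [if_neg h] at hk
        exact absurd hk (Set.notMem_empty ω)
  have hmeas_k : ∀ k, P (s k) = ENNReal.ofReal (f k) := by
    intro k
    simp only [hsdef, hf]
    split_ifs with h
    · have : B' ⁻¹' {k} = {ω | B' ω = k} := rfl
      rw [this, hlaw k]
    · simp
  rw [show {ω | (n : ℝ) * p + n * δ < (B' ω : ℝ)} = {ω | a < (B' ω : ℝ)} from rfl, hunion,
    measure_iUnion hdisj hmeas]
  have htsum : ∑' k, P (s k) = ∑ k ∈ Finset.range (n + 2), ENNReal.ofReal (f k) := by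
    rw [tsum_eq_sum (s := Finset.range (n + 2))]
    · exact Finset.sum_congr rfl fun k _ => hmeas_k k
    · intro k hk
      rw [Finset.mem_range, not_lt] at hk
      rw [hmeas_k k]
      have hch : (n + 1).choose k = 0 := Nat.choose_eq_zero_of_lt (by omega)
      simp only [hf]
      split_ifs
      · rw [hch]; simp
      · simp
  rw [htsum, ← ENNReal.ofReal_sum_of_nonneg (fun k _ => hfnn k)]
  apply ENNReal.ofReal_le_ofReal
  exact real_main n hn p δ hp0 hp1 hδ
end

section
/- Let j ≥ 1 be an integer, let s be an integer with 0 ≤ s ≤ j, and let ε > 0. Let V be a random variable with the Beta(s+1, j-s+1) distribution. Then Pr(V ≥ s/j + ε) ≤ e^{-2ε²·j}. -/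
open Real MeasureTheory

lemma pinsker0 {t : ℝ} (h0 : 0 ≤ t) (h1 : t < 1) : 2 * t ^ 2 ≤ -Real.log (1 - t) := by
  set g : ℝ → ℝ := fun x => -Real.log (1 - x) - 2 * x ^ 2 with hg
  have key : MonotoneOn g (Set.Icc 0 t) := by
    apply monotoneOn_of_deriv_nonneg (convex_Icc 0 t)
    · apply ContinuousOn.sub
      · apply ContinuousOn.neg
        apply ContinuousOn.log (by fun_prop)
        intro x hx
        simp only [Set.mem_Icc] at hx
        nlinarith [hx.1, hx.2]
      · fun_prop
    · intro x hx
      rw [interior_Icc] at hx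
      have hx1 : 1 - x > 0 := by simp only [Set.mem_Ioo] at hx; linarith [hx.2]
      have : HasDerivAt g (-(-1 / (1 - x)) - 2 * (2 * x)) x := by
        apply HasDerivAt.sub
        · exact (((hasDerivAt_id x).const_sub 1).log (ne_of_gt hx1)).neg
        · simpa using ((hasDerivAt_pow 2 x).const_mul 2)
      exact this.differentiableAt.differentiableWithinAt
    · intro x hx
      rw [interior_Icc] at hx
      simp only [Set.mem_Ioo] at hx
      have hx1 : (1 : ℝ) - x > 0 := by linarith [hx.2, h1]
      have hd : HasDerivAt g (-(-1 / (1 - x)) - 2 * (2 * x)) x := by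
        apply HasDerivAt.sub
        · exact (((hasDerivAt_id x).const_sub 1).log (ne_of_gt hx1)).neg
        · simpa using ((hasDerivAt_pow 2 x).const_mul 2)
      rw [hd.deriv]
      have h2 : -(-1 / (1 - x)) - 2 * (2 * x) = (2 * x - 1) ^ 2 / (1 - x) := by
        field_simp; ring
      rw [h2]
      positivity
  have h0' : g 0 ≤ g t := key (by simp [h0]) (by simp [h0]) h0
  simp only [hg] at h0'
  norm_num at h0'
  linarith

lemma pinsker {q t : ℝ} (hq0 : 0 < q) (hqt : q ≤ t) (ht : t < 1) :
    2 * (t - q) ^ 2 ≤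
      q * Real.log q - q * Real.log t + (1 - q) * Real.log (1 - q) - (1 - q) * Real.log (1 - t) := by
  set f : ℝ → ℝ := fun x =>
    q * Real.log q - q * Real.log x + (1 - q) * Real.log (1 - q) - (1 - q) * Real.log (1 - x)
      - 2 * (x - q) ^ 2 with hf
  have hD : ∀ x, q ≤ x → x < 1 → HasDerivAt f
      (0 - q * x⁻¹ + 0 - (1 - q) * (-1 / (1 - x)) - 2 * (2 * (x - q))) x := by
    intro x hx0 hx1
    have hxpos : (0:ℝ) < x := lt_of_lt_of_le hq0 hx0
    have hx1' : (0:ℝ) < 1 - x := by linarith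
    have h1 : HasDerivAt (fun x : ℝ => q * Real.log x) (q * x⁻¹) x :=
      (Real.hasDerivAt_log hxpos.ne').const_mul q
    have h2 : HasDerivAt (fun x : ℝ => (1 - q) * Real.log (1 - x)) ((1 - q) * (-1 / (1 - x))) x :=
      (((hasDerivAt_id x).const_sub 1).log hx1'.ne').const_mul (1 - q)
    have h3 : HasDerivAt (fun x : ℝ => 2 * (x - q) ^ 2) (2 * (2 * (x - q))) x := by
      have := (((hasDerivAt_id x).sub_const q).pow 2).const_mul (2:ℝ)
      simpa using this
    exact (((((hasDerivAt_const x (q * Real.log q)).sub h1).add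
      (hasDerivAt_const x ((1 - q) * Real.log (1 - q)))).sub h2).sub h3)
  have key : MonotoneOn f (Set.Icc q t) := by
    apply monotoneOn_of_deriv_nonneg (convex_Icc q t)
    · apply ContinuousOn.sub
      apply ContinuousOn.sub
      apply ContinuousOn.add
      · apply ContinuousOn.sub continuousOn_const
        apply ContinuousOn.mul continuousOn_const
        apply ContinuousOn.log (by fun_prop)
        intro x hx
        simp only [Set.mem_Icc] at hx
        exact (lt_of_lt_of_le hq0 hx.1).ne'
      · exact continuousOn_const
      · apply ContinuousOn.mul continuousOn_const
        apply ContinuousOn.log (by fun_prop)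
        intro x hx
        simp only [Set.mem_Icc] at hx
        have : x < 1 := lt_of_le_of_lt hx.2 ht
        intro h; linarith [sub_eq_zero.mp h]
      · fun_prop
    · intro x hx
      rw [interior_Icc] at hx
      simp only [Set.mem_Ioo] at hx
      exact (hD x hx.1.le (hx.2.trans ht)).differentiableAt.differentiableWithinAt
    · intro x hx
      rw [interior_Icc] at hx
      simp only [Set.mem_Ioo] at hx
      have hx1 : x < 1 := hx.2.trans ht
      have hd := hD x hx.1.le hx1
      rw [hd.deriv]
      have hxpos : (0:ℝ) < x := lt_of_lt_of_le hq0 hx.1.le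
      have hx1' : (0:ℝ) < 1 - x := by linarith
      have h2 : 0 - q * x⁻¹ + 0 - (1 - q) * (-1 / (1 - x)) - 2 * (2 * (x - q))
          = (x - q) * (2 * x - 1) ^ 2 / (x * (1 - x)) := by
        field_simp; ring
      rw [h2]
      have : 0 ≤ (x - q) := by linarith [hx.1]
      positivity
  have h0' : f q ≤ f t := key (by simp [hqt]) (by simp [hqt]) hqt
  simp only [hf] at h0'
  norm_num at h0'
  linarith

lemma beta_int : ∀ (s m : ℕ) (t : ℝ),
    (((s + m + 1).factorial : ℝ) / ((s.factorial : ℝ) * (m.factorial : ℝ)))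
        * ∫ x in t..1, x ^ s * (1 - x) ^ m
      = ∑ k ∈ Finset.range (s + 1),
          ((s + m + 1).choose k : ℝ) * t ^ k * (1 - t) ^ (s + m + 1 - k) := by
  intro s
  induction s with
  | zero =>
    intro m t
    have h1 : (∫ x in t..1, x ^ 0 * (1 - x) ^ m) = ((1 - t) ^ (m + 1)) / (m + 1) := by
      simp only [pow_zero, one_mul]
      have := intervalIntegral.integral_comp_sub_left (fun u : ℝ => u ^ m) 1 (a := t) (b := 1)
      rw [this, integral_pow]
      norm_num
    rw [h1]
    rw [show (0:ℕ)+1 = 1 from rfl, Finset.sum_range_one, Nat.choose_zero_right]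
    have hm : ((m + 1).factorial : ℝ) = (m + 1) * m.factorial := by
      rw [Nat.factorial_succ]; push_cast; ring
    have hmf : (m.factorial : ℝ) ≠ 0 := Nat.cast_ne_zero.mpr m.factorial_ne_zero
    have : (0 : ℕ) + m + 1 = m + 1 := by omega
    rw [this, hm]
    field_simp
    simp
  | succ s ih =>
    intro m t
    have hIBP : (∫ x in t..1, x ^ (s + 1) * (1 - x) ^ m)
        = t ^ (s + 1) * ((1 - t) ^ (m + 1) / (m + 1))
          + ((s + 1 : ℝ) / (m + 1)) * ∫ x in t..1, x ^ s * (1 - x) ^ (m + 1) := by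
      have hu : ∀ x ∈ Set.uIcc t 1, HasDerivAt (fun x : ℝ => x ^ (s + 1))
          (((s : ℝ) + 1) * x ^ s) x := by
        intro x _
        have := hasDerivAt_pow (s + 1) x
        simpa using this
      have hv : ∀ x ∈ Set.uIcc t 1, HasDerivAt (fun x : ℝ => -(1 - x) ^ (m + 1) / (m + 1))
          ((1 - x) ^ m) x := by
        intro x _
        have h1 : HasDerivAt (fun x : ℝ => (1 - x) ^ (m + 1))
            (((m : ℝ) + 1) * (1 - x) ^ m * (-1)) x := by
          have := (((hasDerivAt_id x).const_sub 1).pow (m + 1))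
          simpa [Pi.pow_def] using this
        have h2 := (h1.neg).div_const ((m : ℝ) + 1)
        have hm1 : ((m : ℝ) + 1) ≠ 0 := by positivity
        exact h2.congr_deriv (by rw [div_eq_iff hm1]; ring)
      have hint1 : IntervalIntegrable (fun x : ℝ => ((s : ℝ) + 1) * x ^ s) volume t 1 :=
        (Continuous.intervalIntegrable (by continuity) t 1)
      have hint2 : IntervalIntegrable (fun x : ℝ => (1 - x) ^ m) volume t 1 :=
        (Continuous.intervalIntegrable (by continuity) t 1)
      have H := intervalIntegral.integral_mul_deriv_eq_deriv_mul hu hv hint1 hint2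
      rw [H]
      have hm1 : ((m : ℝ) + 1) ≠ 0 := by positivity
      have hrw : (∫ x in t..1, ((s : ℝ) + 1) * x ^ s * (-(1 - x) ^ (m + 1) / (m + 1)))
          = (-((s : ℝ) + 1) / (m + 1)) * ∫ x in t..1, x ^ s * (1 - x) ^ (m + 1) := by
        rw [← intervalIntegral.integral_const_mul]
        apply intervalIntegral.integral_congr
        intro x _
        field_simp
      rw [hrw]
      norm_num
      ring
    rw [hIBP]
    have ihm := ih (m + 1) t
    have hcast : s + (m + 1) + 1 = s + 1 + m + 1 := by omega
    rw [hcast] at ihm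
    have hsf : (0:ℝ) < (s.factorial : ℝ) := by exact_mod_cast s.factorial_pos
    have hmf : (0:ℝ) < (m.factorial : ℝ) := by exact_mod_cast m.factorial_pos
    have hs1 : ((s + 1).factorial : ℝ) = ((s : ℝ) + 1) * s.factorial := by
      rw [Nat.factorial_succ]; push_cast; ring
    have hm1 : ((m + 1).factorial : ℝ) = ((m : ℝ) + 1) * m.factorial := by
      rw [Nat.factorial_succ]; push_cast; ring
    have hsum : ∑ k ∈ Finset.range (s + 1 + 1),
          ((s + 1 + m + 1).choose k : ℝ) * t ^ k * (1 - t) ^ (s + 1 + m + 1 - k)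
        = (∑ k ∈ Finset.range (s + 1),
            ((s + 1 + m + 1).choose k : ℝ) * t ^ k * (1 - t) ^ (s + 1 + m + 1 - k))
          + ((s + 1 + m + 1).choose (s + 1) : ℝ) * t ^ (s + 1) * (1 - t) ^ (m + 1) := by
      rw [Finset.sum_range_succ]
      congr 3
      omega
    have hch : ((s + 1 + m + 1).choose (s + 1) : ℝ) * (((s:ℝ) + 1) * s.factorial)
        * (((m:ℝ) + 1) * m.factorial) = ((s + 1 + m + 1).factorial : ℝ) := by
      have h0 := Nat.choose_mul_factorial_mul_factorial
        (show s + 1 ≤ s + 1 + m + 1 by omega) (n := s + 1 + m + 1)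
      have h2 : s + 1 + m + 1 - (s + 1) = m + 1 := by omega
      rw [h2] at h0
      have h3 : (((s + 1 + m + 1).choose (s + 1) : ℝ)) * ((s+1).factorial : ℝ)
          * ((m+1).factorial : ℝ) = ((s + 1 + m + 1).factorial : ℝ) := by exact_mod_cast h0
      rw [hs1, hm1] at h3
      exact h3
    rw [hsum, ← ihm]
    simp only [hm1]
    rw [← hch]
    rw [hs1]
    have hchpos : (0:ℝ) < ((s + 1 + m + 1).choose (s + 1) : ℝ) := by
      exact_mod_cast Nat.choose_pos (show s + 1 ≤ s + 1 + m + 1 by omega)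
    have h1 : ((s:ℝ) + 1) ≠ 0 := by positivity
    have h2 : ((m:ℝ) + 1) ≠ 0 := by positivity
    field_simp
    ring

lemma binom_tail (n s : ℕ) (hs : s < n) (t : ℝ) (hq : (s : ℝ) / n < t) (ht1 : t ≤ 1) :
    ∑ k ∈ Finset.range (s + 1), (n.choose k : ℝ) * t ^ k * (1 - t) ^ (n - k)
      ≤ Real.exp (-2 * n * (t - s / n) ^ 2) := by
  have hn : 0 < n := by omega
  have hnR : (0:ℝ) < n := by exact_mod_cast hn
  have hq0 : (0:ℝ) ≤ (s:ℝ)/n := by positivity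
  have ht0 : 0 < t := lt_of_le_of_lt hq0 hq
  rcases eq_or_lt_of_le ht1 with h1 | h1
  · have hz : ∑ k ∈ Finset.range (s + 1), (n.choose k : ℝ) * t ^ k * (1 - t) ^ (n - k) = 0 := by
      apply Finset.sum_eq_zero
      intro k hk
      simp only [Finset.mem_range] at hk
      have : (1 - t) ^ (n - k) = 0 := by
        rw [h1]; simp only [sub_self]; exact zero_pow (by omega)
      rw [this, mul_zero]
    rw [hz]
    positivity
  · set q : ℝ := (s : ℝ) / n with hqdef
    have hq1 : q < 1 := lt_trans hq h1
    have h1t : (0:ℝ) < 1 - t := by linarith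
    have h1q : (0:ℝ) < 1 - q := by linarith
    rcases Nat.eq_zero_or_pos s with hs0 | hs0
    · subst hs0
      have hsum : ∑ k ∈ Finset.range (0 + 1), (n.choose k : ℝ) * t ^ k * (1 - t) ^ (n - k)
          = (1 - t) ^ n := by simp
      rw [hsum]
      have hlog : 2 * t ^ 2 ≤ -Real.log (1 - t) := pinsker0 ht0.le h1
      have hpow : (1 - t) ^ n = Real.exp (n * Real.log (1 - t)) := by
        rw [← Real.log_pow, Real.exp_log (by positivity)]
      rw [hpow]
      apply Real.exp_le_exp.mpr
      have hq' : q = 0 := by simp [hqdef]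
      rw [hq']
      nlinarith [hnR]
    · have hqpos : 0 < q := by positivity
      set lam : ℝ := Real.log (t * (1 - q) / (q * (1 - t))) with hlam
      have hargpos : 0 < t * (1 - q) / (q * (1 - t)) := by positivity
      have harg1 : 1 ≤ t * (1 - q) / (q * (1 - t)) := by
        rw [le_div_iff₀ (by positivity)]
        nlinarith
      have hlam0 : 0 ≤ lam := Real.log_nonneg harg1
      have hexplam : Real.exp lam = t * (1 - q) / (q * (1 - t)) := Real.exp_log hargpos
      have step1 : ∑ k ∈ Finset.range (s + 1), (n.choose k : ℝ) * t ^ k * (1 - t) ^ (n - k)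
          ≤ ∑ k ∈ Finset.range (s + 1),
              Real.exp (lam * s) * ((t * Real.exp (-lam)) ^ k * (1 - t) ^ (n - k)
                * (n.choose k : ℝ)) := by
        apply Finset.sum_le_sum
        intro k hk
        simp only [Finset.mem_range] at hk
        have hks : (k : ℝ) ≤ s := by exact_mod_cast Nat.lt_succ_iff.mp hk
        have hrw : Real.exp (lam * s) * ((t * Real.exp (-lam)) ^ k * (1 - t) ^ (n - k)
              * (n.choose k : ℝ))
            = Real.exp (lam * (s - k)) * ((n.choose k : ℝ) * t ^ k * (1 - t) ^ (n - k)) := by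
          rw [mul_pow, ← Real.exp_nat_mul]
          rw [show lam * ((s:ℝ) - k) = lam * s + (k:ℝ) * -lam by ring, Real.exp_add]
          ring
        rw [hrw]
        nth_rewrite 1 [show (n.choose k : ℝ) * t ^ k * (1 - t) ^ (n - k)
          = 1 * ((n.choose k : ℝ) * t ^ k * (1 - t) ^ (n - k)) by ring]
        apply mul_le_mul_of_nonneg_right
        · exact Real.one_le_exp (by nlinarith)
        · positivity
      have step2 : ∑ k ∈ Finset.range (s + 1),
            Real.exp (lam * s) * ((t * Real.exp (-lam)) ^ k * (1 - t) ^ (n - k)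
              * (n.choose k : ℝ))
          ≤ Real.exp (lam * s) * (t * Real.exp (-lam) + (1 - t)) ^ n := by
        rw [add_pow, Finset.mul_sum]
        apply Finset.sum_le_sum_of_subset_of_nonneg
          (Finset.range_subset_range.mpr (by omega))
        intro k _ _
        positivity
      have hval : t * Real.exp (-lam) + (1 - t) = (1 - t) / (1 - q) := by
        rw [Real.exp_neg, hexplam]
        field_simp
        ring
      have step3 : Real.exp (lam * s) * (t * Real.exp (-lam) + (1 - t)) ^ n
          ≤ Real.exp (-2 * n * (t - q) ^ 2) := by
        rw [hval]
        have hpow : ((1 - t) / (1 - q)) ^ n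
            = Real.exp (n * Real.log ((1 - t) / (1 - q))) := by
          rw [← Real.log_pow, Real.exp_log (by positivity)]
        rw [hpow, ← Real.exp_add]
        apply Real.exp_le_exp.mpr
        have hsn : (s : ℝ) = q * n := by rw [hqdef]; field_simp
        have hpin := pinsker hqpos hq.le h1
        have hllog : lam = Real.log t + Real.log (1 - q) - (Real.log q + Real.log (1 - t)) := by
          rw [hlam, Real.log_div (by positivity) (by positivity),
            Real.log_mul ht0.ne' h1q.ne', Real.log_mul hqpos.ne' h1t.ne']
        have hllog2 : Real.log ((1 - t) / (1 - q)) = Real.log (1 - t) - Real.log (1 - q) := by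
          rw [Real.log_div h1t.ne' h1q.ne']
        rw [hllog, hllog2, hsn]
        nlinarith [hpin, hnR]
      calc _ ≤ _ := step1
        _ ≤ _ := step2
        _ ≤ _ := step3

/-- upper tail of the Beta posterior: If `V ~ Beta(s+1, j-s+1)` with
`0 ≤ s ≤ j`, `j ≥ 1`, then `Pr(V ≥ s/j + ε) ≤ e^{-2ε²j}`. -/
theorem stmt13 {Ω : Type*} [MeasurableSpace Ω] (P : Measure Ω) [IsProbabilityMeasure P]
    (j s : ℕ) (hj : 1 ≤ j) (hs : s ≤ j) (ε : ℝ) (hε : 0 < ε)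
    (V : Ω → ℝ) (hV : Measurable V)
    (hVlaw : Measure.map V P =
      (volume.restrict (Set.Icc (0 : ℝ) 1)).withDensity fun x =>
        ENNReal.ofReal (x ^ s * (1 - x) ^ (j - s) *
          ((j + 1).factorial : ℝ) / ((s.factorial : ℝ) * ((j - s).factorial : ℝ)))) :
    P {ω | (s : ℝ) / (j : ℝ) + ε ≤ V ω} ≤
      ENNReal.ofReal (Real.exp (-2 * ε ^ 2 * (j : ℝ))) := by
  obtain ⟨m, rfl⟩ : ∃ m, j = s + m := ⟨j - s, by omega⟩
  rw [Nat.add_sub_cancel_left] at hVlaw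
  set t : ℝ := (s : ℝ) / ((s + m : ℕ) : ℝ) + ε with htdef
  set f : ℝ → ℝ := fun x => x ^ s * (1 - x) ^ m *
      (((s + m + 1).factorial : ℝ)) / ((s.factorial : ℝ) * (m.factorial : ℝ)) with hfdef
  have hjR : (1:ℝ) ≤ ((s + m : ℕ) : ℝ) := by exact_mod_cast hj
  have hjpos : (0:ℝ) < ((s + m : ℕ) : ℝ) := by linarith
  have hq0 : (0:ℝ) ≤ (s : ℝ) / ((s + m : ℕ) : ℝ) := by positivity
  have ht0 : 0 < t := by rw [htdef]; linarith
  have hmain : P {ω | t ≤ V ω} = ∫⁻ x in Set.Ici t ∩ Set.Icc (0:ℝ) 1, ENNReal.ofReal (f x) := by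
    have hpre : {ω | t ≤ V ω} = V ⁻¹' Set.Ici t := rfl
    rw [hpre, ← Measure.map_apply hV measurableSet_Ici, hVlaw,
      withDensity_apply _ measurableSet_Ici, Measure.restrict_restrict measurableSet_Ici]
  rw [hmain]
  rcases le_or_gt t 1 with ht1 | ht1
  · have hset : Set.Ici t ∩ Set.Icc (0:ℝ) 1 = Set.Icc t 1 := by
      ext x
      simp only [Set.mem_inter_iff, Set.mem_Ici, Set.mem_Icc]
      constructor
      · rintro ⟨h1, _, h3⟩; exact ⟨h1, h3⟩
      · rintro ⟨h1, h2⟩; exact ⟨h1, by linarith, h2⟩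
    rw [hset]
    have hcont : Continuous f := by fun_prop
    have hint : Integrable f (volume.restrict (Set.Icc t 1)) := hcont.integrableOn_Icc
    have hnn : 0 ≤ᵐ[volume.restrict (Set.Icc t 1)] f := by
      apply ae_restrict_of_forall_mem measurableSet_Icc
      intro x hx
      simp only [Set.mem_Icc] at hx
      have h1 : 0 ≤ x := le_trans ht0.le hx.1
      have h2 : 0 ≤ 1 - x := by linarith [hx.2]
      rw [hfdef]
      positivity
    rw [← ofReal_integral_eq_lintegral_ofReal hint hnn]
    apply ENNReal.ofReal_le_ofReal
    -- real inequality
    have hIcc : ∫ x in Set.Icc t 1, f x = ∫ x in t..1, f x := by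
      rw [integral_Icc_eq_integral_Ioc, ← intervalIntegral.integral_of_le ht1]
    rw [hIcc]
    have hpull : ∫ x in t..1, f x
        = (((s + m + 1).factorial : ℝ) / ((s.factorial : ℝ) * (m.factorial : ℝ)))
          * ∫ x in t..1, x ^ s * (1 - x) ^ m := by
      rw [← intervalIntegral.integral_const_mul]
      apply intervalIntegral.integral_congr
      intro x _
      rw [hfdef]
      ring
    rw [hpull, beta_int s m t]
    have hnpos : (0:ℝ) < ((s + m + 1 : ℕ) : ℝ) := by positivity
    have h1 : (s : ℝ) / ((s + m + 1 : ℕ) : ℝ) ≤ (s : ℝ) / ((s + m : ℕ) : ℝ) := by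
      rw [div_le_div_iff₀ hnpos hjpos]
      push_cast
      nlinarith [Nat.cast_nonneg (α := ℝ) s, Nat.cast_nonneg (α := ℝ) m]
    have hlt : (s : ℝ) / ((s + m + 1 : ℕ) : ℝ) < t := by
      rw [htdef]; linarith
    have htail := binom_tail (s + m + 1) s (by omega) t hlt ht1
    apply htail.trans
    apply Real.exp_le_exp.mpr
    have hd : ε ≤ t - (s : ℝ) / ((s + m + 1 : ℕ) : ℝ) := by
      rw [htdef]; linarith
    push_cast at hd ⊢
    have hdd : ε ^ 2 ≤ (t - (s:ℝ) / ((s:ℝ) + (m:ℝ) + 1)) ^ 2 := by nlinarith [hd, hε]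
    have hjnn : (0:ℝ) ≤ (s:ℝ) + (m:ℝ) := by positivity
    nlinarith [mul_nonneg hjnn (sub_nonneg.mpr hdd), hdd]
  · have hset : Set.Ici t ∩ Set.Icc (0:ℝ) 1 = ∅ := by
      ext x
      simp only [Set.mem_inter_iff, Set.mem_Ici, Set.mem_Icc, Set.mem_empty_iff_false,
        iff_false, not_and]
      intro h1 h2
      intro h3
      linarith
    rw [hset]
    simp
end

section
/- Let j ≥ 1 be an integer, let s be an integer with 0 ≤ s ≤ j, and let ε > 0. Let V be a random variable with the Beta(s+1, j-s+1) distribution. Then Pr(V ≤ s/j - ε) ≤ e^{4ε - 2ε²·j}. -/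
open MeasureTheory Finset Real

lemma bern_mgf_le (t θ : ℝ) (ht0 : 0 ≤ t) (ht1 : t ≤ 1) (hθ : 0 ≤ θ) :
    1 - t + t * Real.exp θ ≤ Real.exp (t * θ + θ ^ 2 / 8) := by
  have hD : ∀ x : ℝ, 0 < 1 - t + t * Real.exp x := by
    intro x
    rcases eq_or_lt_of_le ht0 with h | h
    · simp [← h]
    · nlinarith [Real.exp_pos x, mul_pos h (Real.exp_pos x)]
  set G : ℝ → ℝ := fun x => t + x / 4 - t * Real.exp x / (1 - t + t * Real.exp x) with hGdef
  have hDder : ∀ x : ℝ, HasDerivAt (fun y => 1 - t + t * Real.exp y) (t * Real.exp x) x := by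
    intro x
    simpa using (((Real.hasDerivAt_exp x).const_mul t).const_add (1 - t))
  have hg' : ∀ x : ℝ, HasDerivAt (fun y => t * y + y ^ 2 / 8 - Real.log (1 - t + t * Real.exp y)) (G x) x := by
    intro x
    have h1 : HasDerivAt (fun y : ℝ => t * y + y ^ 2 / 8) (t + x / 4) x := by
      have := ((hasDerivAt_id x).const_mul t).add ((hasDerivAt_pow 2 x).div_const 8)
      convert this using 1
      iterate 3 rfl
      ring
    have h2 := (hDder x).log (ne_of_gt (hD x))
    exact h1.sub h2
  have hG' : ∀ x : ℝ, HasDerivAt G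
      (1 / 4 - t * (1 - t) * Real.exp x / (1 - t + t * Real.exp x) ^ 2) x := by
    intro x
    have h3 : HasDerivAt (fun y => t * Real.exp y) (t * Real.exp x) x :=
      (Real.hasDerivAt_exp x).const_mul t
    have h4 := h3.div (hDder x) (ne_of_gt (hD x))
    have h5 : HasDerivAt (fun y : ℝ => t + y / 4) (1 / 4) x := by
      simpa using ((hasDerivAt_id x).div_const 4).const_add t
    have := h5.sub h4
    convert this using 1
    iterate 3 rfl
    have hne := ne_of_gt (hD x)
    field_simp
    ring
  have hGmono : Monotone G :=
    monotone_of_deriv_nonneg (fun x => (hG' x).differentiableAt) (by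
      intro x
      rw [(hG' x).deriv]
      rw [sub_nonneg, div_le_iff₀ (pow_pos (hD x) 2)]
      nlinarith [sq_nonneg (1 - t - t * Real.exp x), Real.exp_pos x])
  have hG0 : G 0 = 0 := by simp [hGdef]
  have hGpos : ∀ x : ℝ, 0 ≤ x → 0 ≤ G x := fun x hx => hG0 ▸ hGmono hx
  have hmono : MonotoneOn (fun y => t * y + y ^ 2 / 8 - Real.log (1 - t + t * Real.exp y)) (Set.Ici 0) := by
    apply monotoneOn_of_deriv_nonneg (convex_Ici 0)
    · exact fun x _ => ((hg' x).differentiableAt).continuousAt.continuousWithinAt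
    · intro x hx
      exact ((hg' x).differentiableAt).differentiableWithinAt
    · intro x hx
      rw [(hg' x).deriv]
      exact hGpos x (le_of_lt (by simpa using hx))
  have key : 0 ≤ t * θ + θ ^ 2 / 8 - Real.log (1 - t + t * Real.exp θ) := by
    have := hmono (Set.mem_Ici.2 (le_refl (0:ℝ))) (Set.mem_Ici.2 hθ) hθ
    simpa using this
  calc 1 - t + t * Real.exp θ = Real.exp (Real.log (1 - t + t * Real.exp θ)) :=
        (Real.exp_log (hD θ)).symm
    _ ≤ Real.exp (t * θ + θ ^ 2 / 8) := Real.exp_le_exp.2 (by linarith)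


lemma term_deriv (n k : ℕ) (x : ℝ) :
    HasDerivAt (fun y : ℝ => (n.choose k : ℝ) * y ^ k * (1 - y) ^ (n - k))
      ((n.choose k : ℝ) * ((k : ℝ) * x ^ (k - 1) * (1 - x) ^ (n - k)
        - ((n - k : ℕ) : ℝ) * x ^ k * (1 - x) ^ (n - k - 1))) x := by
  have h1 : HasDerivAt (fun y : ℝ => y ^ k) ((k : ℝ) * x ^ (k - 1)) x := hasDerivAt_pow k x
  have hlin : HasDerivAt (fun y : ℝ => 1 - y) (-1 : ℝ) x := by
    simpa using (hasDerivAt_id x).const_sub 1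
  have h2 : HasDerivAt (fun y : ℝ => (1 - y) ^ (n - k))
      (((n - k : ℕ) : ℝ) * (1 - x) ^ (n - k - 1) * (-1)) x :=
    (hasDerivAt_pow (n - k) (1 - x)).comp x hlin
  have h3 := (h1.mul h2).const_mul ((n.choose k : ℝ))
  have hfe : (fun y : ℝ => (n.choose k : ℝ) * y ^ k * (1 - y) ^ (n - k))
      = fun y : ℝ => (n.choose k : ℝ) * (y ^ k * (1 - y) ^ (n - k)) := by
    funext y; ring
  rw [hfe]
  convert h3 using 1
  iterate 3 rfl
  ring

lemma sum_deriv (n : ℕ) : ∀ s : ℕ, s < n → ∀ x : ℝ,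
    HasDerivAt (fun y : ℝ => ∑ k ∈ range (s + 1), (n.choose k : ℝ) * y ^ k * (1 - y) ^ (n - k))
      (-((n.choose s : ℝ) * ((n - s : ℕ) : ℝ) * x ^ s * (1 - x) ^ (n - s - 1))) x := by
  intro s
  induction s with
  | zero =>
    intro hn x
    simp only [zero_add, Finset.sum_range_one]
    have := term_deriv n 0 x
    convert this using 1
    simp
  | succ s ih =>
    intro hn x
    have hs : s < n := Nat.lt_of_succ_lt hn
    have h1 := ih hs x
    have h2 := term_deriv n (s + 1) x
    have h3 := h1.add h2
    have hfe : (fun y : ℝ => ∑ k ∈ range (s + 1 + 1), (n.choose k : ℝ) * y ^ k * (1 - y) ^ (n - k))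
        = fun y : ℝ => (∑ k ∈ range (s + 1), (n.choose k : ℝ) * y ^ k * (1 - y) ^ (n - k))
          + (n.choose (s + 1) : ℝ) * y ^ (s + 1) * (1 - y) ^ (n - (s + 1)) := by
      funext y; rw [Finset.sum_range_succ]
    rw [hfe]
    convert h3 using 1
    iterate 3 rfl
    have hcc : ((n.choose (s + 1) : ℝ)) * ((s + 1 : ℕ) : ℝ)
        = (n.choose s : ℝ) * ((n - s : ℕ) : ℝ) := by
      exact_mod_cast congrArg (Nat.cast (R := ℝ)) (Nat.choose_succ_right_eq n s)
    have he1 : n - (s + 1) = n - s - 1 := by omega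
    have he2 : s + 1 - 1 = s := by omega
    rw [he1, he2] at *
    push_cast at hcc ⊢
    linear_combination -(x ^ s) * (1 - x) ^ (n - s - 1) * hcc


lemma chernoff_sum (j s : ℕ) (hj : 1 ≤ j) (hs : s ≤ j) (ε t : ℝ) (hε : 0 < ε)
    (ht : t = (s : ℝ) / j - ε) (ht0 : 0 < t) :
    ∑ k ∈ Ico (s + 1) (j + 2), ((j + 1).choose k : ℝ) * t ^ k * (1 - t) ^ (j + 1 - k)
      ≤ Real.exp (4 * ε - 2 * ε ^ 2 * j) := by
  have hj0 : (0 : ℝ) < j := by exact_mod_cast hj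
  have hsj : (s : ℝ) / j ≤ 1 := by
    rw [div_le_one hj0]; exact_mod_cast hs
  have ht1 : t ≤ 1 := by rw [ht]; linarith
  have ht1' : 0 ≤ 1 - t := by linarith
  set θ : ℝ := 4 * ε with hθdef
  have hθ0 : 0 ≤ θ := by positivity
  have step1 : ∑ k ∈ Ico (s + 1) (j + 2), ((j + 1).choose k : ℝ) * t ^ k * (1 - t) ^ (j + 1 - k)
      ≤ ∑ k ∈ Ico (s + 1) (j + 2), Real.exp (-θ * (s + 1)) *
          (((j + 1).choose k : ℝ) * (t * Real.exp θ) ^ k * (1 - t) ^ (j + 1 - k)) := by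
    apply Finset.sum_le_sum
    intro k hk
    rw [Finset.mem_Ico] at hk
    have h1 : (1 : ℝ) ≤ Real.exp (-θ * (s + 1)) * Real.exp θ ^ k := by
      rw [← Real.exp_nat_mul, ← Real.exp_add]
      apply Real.one_le_exp
      have : (s : ℝ) + 1 ≤ (k : ℝ) := by exact_mod_cast hk.1
      nlinarith
    have hterm : 0 ≤ ((j + 1).choose k : ℝ) * t ^ k * (1 - t) ^ (j + 1 - k) := by positivity
    calc ((j + 1).choose k : ℝ) * t ^ k * (1 - t) ^ (j + 1 - k)
        = 1 * (((j + 1).choose k : ℝ) * t ^ k * (1 - t) ^ (j + 1 - k)) := by ring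
      _ ≤ (Real.exp (-θ * (s + 1)) * Real.exp θ ^ k) *
            (((j + 1).choose k : ℝ) * t ^ k * (1 - t) ^ (j + 1 - k)) :=
          mul_le_mul_of_nonneg_right h1 hterm
      _ = Real.exp (-θ * (s + 1)) *
            (((j + 1).choose k : ℝ) * (t * Real.exp θ) ^ k * (1 - t) ^ (j + 1 - k)) := by
          rw [mul_pow]; ring
  have step2 : ∑ k ∈ Ico (s + 1) (j + 2), Real.exp (-θ * (s + 1)) *
          (((j + 1).choose k : ℝ) * (t * Real.exp θ) ^ k * (1 - t) ^ (j + 1 - k))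
      ≤ Real.exp (-θ * (s + 1)) *
          ∑ k ∈ range (j + 2), (((j + 1).choose k : ℝ) * (t * Real.exp θ) ^ k * (1 - t) ^ (j + 1 - k)) := by
    rw [← Finset.mul_sum]
    apply mul_le_mul_of_nonneg_left _ (Real.exp_pos _).le
    apply Finset.sum_le_sum_of_subset_of_nonneg
    · intro k hk
      rw [Finset.mem_Ico] at hk; rw [Finset.mem_range]; omega
    · intro k _ _
      have hte : 0 ≤ t * Real.exp θ := by positivity
      positivity
  have hbinom : ∑ k ∈ range (j + 2), (((j + 1).choose k : ℝ) * (t * Real.exp θ) ^ k * (1 - t) ^ (j + 1 - k))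
      = (t * Real.exp θ + (1 - t)) ^ (j + 1) := by
    rw [add_pow]
    apply Finset.sum_congr rfl
    intro k _; ring
  have hbern : (t * Real.exp θ + (1 - t)) ^ (j + 1)
      ≤ Real.exp (((j + 1 : ℕ) : ℝ) * (t * θ + θ ^ 2 / 8)) := by
    have h1 : t * Real.exp θ + (1 - t) = 1 - t + t * Real.exp θ := by ring
    rw [h1]
    calc (1 - t + t * Real.exp θ) ^ (j + 1)
        ≤ (Real.exp (t * θ + θ ^ 2 / 8)) ^ (j + 1) := by
          apply pow_le_pow_left₀ (by positivity) (bern_mgf_le t θ ht0.le ht1 hθ0)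
      _ = Real.exp (((j + 1 : ℕ) : ℝ) * (t * θ + θ ^ 2 / 8)) := (Real.exp_nat_mul _ _).symm
  have final : Real.exp (-θ * (s + 1)) * Real.exp (((j + 1 : ℕ) : ℝ) * (t * θ + θ ^ 2 / 8))
      ≤ Real.exp (4 * ε - 2 * ε ^ 2 * j) := by
    rw [← Real.exp_add]
    apply Real.exp_le_exp.2
    have hd : (s : ℝ) / j * j = s := div_mul_cancel₀ _ (ne_of_gt hj0)
    have hd' : ε * ((s : ℝ) / j * j) = ε * s := by rw [hd]
    have hεu : ε * ((s : ℝ) / j) ≤ ε * 1 := mul_le_mul_of_nonneg_left hsj hε.le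
    rw [ht, hθdef]
    push_cast
    nlinarith [hd', hεu, sq_nonneg ε]
  calc ∑ k ∈ Ico (s + 1) (j + 2), ((j + 1).choose k : ℝ) * t ^ k * (1 - t) ^ (j + 1 - k)
      ≤ _ := step1
    _ ≤ _ := step2
    _ ≤ Real.exp (-θ * (s + 1)) * Real.exp (((j + 1 : ℕ) : ℝ) * (t * θ + θ ^ 2 / 8)) := by
        rw [hbinom]
        exact mul_le_mul_of_nonneg_left hbern (Real.exp_pos _).le
    _ ≤ _ := final


/-- lower tail of the Beta posterior: If `V ~ Beta(s+1, j-s+1)` with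
`0 ≤ s ≤ j`, `j ≥ 1`, then `Pr(V ≤ s/j - ε) ≤ e^{4ε - 2ε²j}`. -/
theorem stmt14 {Ω : Type*} [MeasurableSpace Ω] (P : Measure Ω) [IsProbabilityMeasure P]
    (j s : ℕ) (hj : 1 ≤ j) (hs : s ≤ j) (ε : ℝ) (hε : 0 < ε)
    (V : Ω → ℝ) (hV : Measurable V)
    (hVlaw : Measure.map V P =
      (volume.restrict (Set.Icc (0 : ℝ) 1)).withDensity fun x =>
        ENNReal.ofReal (x ^ s * (1 - x) ^ (j - s) *
          ((j + 1).factorial : ℝ) / ((s.factorial : ℝ) * ((j - s).factorial : ℝ)))) :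
    P {ω | V ω ≤ (s : ℝ) / (j : ℝ) - ε} ≤
      ENNReal.ofReal (Real.exp (4 * ε - 2 * ε ^ 2 * (j : ℝ))) := by
  set t : ℝ := (s : ℝ) / j - ε with htdef
  have hj0 : (0 : ℝ) < j := by exact_mod_cast hj
  have hsj : (s : ℝ) / j ≤ 1 := by rw [div_le_one hj0]; exact_mod_cast hs
  have ht1 : t ≤ 1 := by rw [htdef]; linarith
  have hP : P {ω | V ω ≤ t} = ∫⁻ x in Set.Iic t ∩ Set.Icc (0 : ℝ) 1,
      ENNReal.ofReal (x ^ s * (1 - x) ^ (j - s) *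
        ((j + 1).factorial : ℝ) / ((s.factorial : ℝ) * ((j - s).factorial : ℝ))) ∂volume := by
    have h0 : {ω | V ω ≤ t} = V ⁻¹' Set.Iic t := rfl
    rw [h0, ← Measure.map_apply hV measurableSet_Iic, hVlaw,
      withDensity_apply _ measurableSet_Iic,
      Measure.restrict_restrict measurableSet_Iic]
  rw [hP]
  rcases le_or_gt t 0 with htle | ht0
  · have hnull : volume (Set.Iic t ∩ Set.Icc (0 : ℝ) 1) = 0 := by
      have hsub0 : Set.Iic t ∩ Set.Icc (0:ℝ) 1 ⊆ {0} := by
        intro x hx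
        have : x = 0 := le_antisymm (hx.1.trans htle) hx.2.1
        simp [this]
      exact measure_mono_null hsub0 (measure_singleton 0)
    rw [Measure.restrict_eq_zero.2 hnull, lintegral_zero_measure]
    exact zero_le
  · have hset : Set.Iic t ∩ Set.Icc (0 : ℝ) 1 = Set.Icc 0 t := by
      ext x
      simp only [Set.mem_inter_iff, Set.mem_Iic, Set.mem_Icc]
      constructor
      · rintro ⟨h1, h2, _⟩; exact ⟨h2, h1⟩
      · rintro ⟨h1, h2⟩; exact ⟨h2, h1, h2.trans ht1⟩
    rw [hset]
    set c : ℝ := ((j + 1).factorial : ℝ) / ((s.factorial : ℝ) * ((j - s).factorial : ℝ)) with hcdef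
    have hc0 : 0 < c := by positivity
    have hfun : ∀ x : ℝ, ENNReal.ofReal (x ^ s * (1 - x) ^ (j - s) *
        ((j + 1).factorial : ℝ) / ((s.factorial : ℝ) * ((j - s).factorial : ℝ)))
        = ENNReal.ofReal (c * (x ^ s * (1 - x) ^ (j - s))) := by
      intro x; congr 1; rw [hcdef]; ring
    simp only [hfun]
    have hcont : Continuous fun x : ℝ => c * (x ^ s * (1 - x) ^ (j - s)) := by continuity
    have hInt : IntegrableOn (fun x : ℝ => c * (x ^ s * (1 - x) ^ (j - s))) (Set.Icc 0 t) volume :=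
      hcont.integrableOn_Icc
    have hae : 0 ≤ᵐ[volume.restrict (Set.Icc (0:ℝ) t)]
        fun x : ℝ => c * (x ^ s * (1 - x) ^ (j - s)) := by
      filter_upwards [ae_restrict_mem measurableSet_Icc] with x hx
      have h1 : (0:ℝ) ≤ x := hx.1
      have h2 : x ≤ 1 := hx.2.trans ht1
      have : (0:ℝ) ≤ 1 - x := by linarith
      positivity
    rw [← ofReal_integral_eq_lintegral_ofReal hInt hae]
    apply ENNReal.ofReal_le_ofReal
    -- FTC
    have hc : c = (((j + 1).choose s : ℕ) : ℝ) * ((j + 1 - s : ℕ) : ℝ) := by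
      have hfact : (j + 1).choose s * s.factorial * (j + 1 - s).factorial = (j + 1).factorial :=
        Nat.choose_mul_factorial_mul_factorial (by omega)
      have hsub : j + 1 - s = (j - s) + 1 := by omega
      have hfact2 : (j + 1 - s).factorial = (j + 1 - s) * (j - s).factorial := by
        rw [hsub]; rw [Nat.factorial_succ]
      rw [hcdef]
      rw [div_eq_iff (by positivity)]
      rw [← hfact, hfact2]
      push_cast
      ring
    have hder : ∀ x ∈ Set.uIcc (0 : ℝ) t,
        HasDerivAt (fun y : ℝ => ∑ k ∈ range (s + 1),
            ((j + 1).choose k : ℝ) * y ^ k * (1 - y) ^ (j + 1 - k))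
          (-(c * (x ^ s * (1 - x) ^ (j - s)))) x := by
      intro x _
      have := sum_deriv (j + 1) s (by omega) x
      convert this using 1
      have he : j + 1 - s - 1 = j - s := by omega
      rw [hc, he]
      ring
    have hFTC := intervalIntegral.integral_eq_sub_of_hasDerivAt hder
      (hcont.neg.intervalIntegrable 0 t)
    have hval : ∫ x in Set.Icc (0:ℝ) t, c * (x ^ s * (1 - x) ^ (j - s))
        = (∑ k ∈ range (s + 1), ((j + 1).choose k : ℝ) * (0:ℝ) ^ k * (1 - 0) ^ (j + 1 - k))
          - ∑ k ∈ range (s + 1), ((j + 1).choose k : ℝ) * t ^ k * (1 - t) ^ (j + 1 - k) := by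
      rw [MeasureTheory.integral_Icc_eq_integral_Ioc,
        ← intervalIntegral.integral_of_le ht0.le]
      have : ∫ x in (0:ℝ)..t, c * (x ^ s * (1 - x) ^ (j - s))
          = -∫ x in (0:ℝ)..t, -(c * (x ^ s * (1 - x) ^ (j - s))) := by
        rw [intervalIntegral.integral_neg]; ring
      rw [this, hFTC]
      ring
    have hg0 : (∑ k ∈ range (s + 1), ((j + 1).choose k : ℝ) * (0:ℝ) ^ k * (1 - 0) ^ (j + 1 - k)) = 1 := by
      rw [Finset.sum_range_succ']
      simp
    have htot : ∑ k ∈ range (j + 2), ((j + 1).choose k : ℝ) * t ^ k * (1 - t) ^ (j + 1 - k) = 1 := by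
      have h1 : ∑ k ∈ range (j + 2), ((j + 1).choose k : ℝ) * t ^ k * (1 - t) ^ (j + 1 - k)
          = ((t + (1 - t)) : ℝ) ^ (j + 1) := by
        rw [add_pow]
        apply Finset.sum_congr rfl
        intro k _; ring
      rw [h1]; norm_num
    have hico : (∑ k ∈ range (s + 1), ((j + 1).choose k : ℝ) * (0:ℝ) ^ k * (1 - 0) ^ (j + 1 - k))
          - ∑ k ∈ range (s + 1), ((j + 1).choose k : ℝ) * t ^ k * (1 - t) ^ (j + 1 - k)
        = ∑ k ∈ Ico (s + 1) (j + 2), ((j + 1).choose k : ℝ) * t ^ k * (1 - t) ^ (j + 1 - k) := by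
      rw [hg0, Finset.sum_Ico_eq_sub _ (by omega : s + 1 ≤ j + 2), htot]
    rw [hval, hico]
    exact chernoff_sum j s hj hs ε t hε htdef ht0
end

section
/- Let m ≥ 1 be a natural number, η ∈ (0,1), p* ∈ (0,1], and let t ≥ 1 be a natural number. Let Z be a random variable taking values in [0,1] such that for all δ ∈ (0,1], Pr(Z ≥ δ) ≤ 2m/(t²(1 - e^{-2δ²})) + 2m·e^{-2δ²·η·p*·t}. Then E[Z] ≤ t^{-1/2}·(2m·√(π/(2·η·p*)) + 3m). -/
open MeasureTheory Real

private lemma chord_bound (y : ℝ) (h0 : 0 ≤ y) (h1 : y ≤ 1) :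
    (1 - Real.exp (-2)) * y ≤ 1 - Real.exp (-2 * y) := by
  have hconv := convexOn_exp.2 (Set.mem_univ (-2 : ℝ)) (Set.mem_univ (0 : ℝ))
    h0 (by linarith : (0:ℝ) ≤ 1 - y) (by ring)
  simp only [smul_eq_mul, mul_zero, add_zero, Real.exp_zero, mul_one] at hconv
  have h : -2 * y = y * -2 := by ring
  rw [h]; nlinarith [hconv]

set_option maxHeartbeats 1000000 in
/-- If `Z ∈ [0,1]` satisfies, for all `δ ∈ (0,1]`,
`Pr(Z ≥ δ) ≤ 2m/(t²(1-e^{-2δ²})) + 2m e^{-2δ²ηp*t}`, then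
`E[Z] ≤ t^{-1/2}(2m√(π/(2ηp*)) + 3m)`. -/
theorem stmt15 {Ω : Type*} [MeasurableSpace Ω] (P : Measure Ω) [IsProbabilityMeasure P]
    (m : ℕ) (hm : 1 ≤ m) (η pstar : ℝ)
    (hη : η ∈ Set.Ioo (0 : ℝ) 1) (hp : pstar ∈ Set.Ioc (0 : ℝ) 1)
    (t : ℕ) (ht : 1 ≤ t)
    (Z : Ω → ℝ) (hZmeas : Measurable Z) (hZ : ∀ ω, Z ω ∈ Set.Icc (0 : ℝ) 1)
    (htail : ∀ δ : ℝ, δ ∈ Set.Ioc (0 : ℝ) 1 →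
      P {ω | δ ≤ Z ω} ≤ ENNReal.ofReal
        (2 * m / ((t : ℝ) ^ 2 * (1 - Real.exp (-2 * δ ^ 2))) +
          2 * m * Real.exp (-2 * δ ^ 2 * η * pstar * t))) :
    ∫ ω, Z ω ∂P ≤
      ((t : ℝ) ^ (-(1 : ℝ) / 2)) * (2 * m * Real.sqrt (π / (2 * η * pstar)) + 3 * m) := by
  obtain ⟨hη0, hη1⟩ := hη
  obtain ⟨hp0, hp1⟩ := hp
  have hm1 : (1 : ℝ) ≤ m := by exact_mod_cast hm
  set T : ℝ := (t : ℝ) with hTdef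
  have hT1 : (1 : ℝ) ≤ T := by rw [hTdef]; exact_mod_cast ht
  have hT0 : (0 : ℝ) < T := by linarith
  have hsT1 : (1 : ℝ) ≤ Real.sqrt T := by
    rw [show (1:ℝ) = Real.sqrt 1 by simp]; exact Real.sqrt_le_sqrt hT1
  have hsT0 : (0 : ℝ) < Real.sqrt T := by linarith
  set δ₀ : ℝ := (Real.sqrt T)⁻¹ with hδ₀def
  have hδ₀0 : 0 < δ₀ := inv_pos.mpr hsT0
  have hδ₀1 : δ₀ ≤ 1 := by
    rw [hδ₀def]; exact inv_le_one_of_one_le₀ hsT1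
  have hδ₀sq : δ₀ ^ 2 = T⁻¹ := by
    rw [hδ₀def, ← Real.sqrt_inv, Real.sq_sqrt (by positivity)]
  -- the tail function
  set g : ℝ → ℝ := fun x => (P {ω | x < Z ω}).toReal with hgdef
  have hganti : Antitone g := by
    intro a b hab
    exact ENNReal.toReal_mono (measure_ne_top P _)
      (measure_mono (fun ω hω => lt_of_le_of_lt hab hω))
  have hgmeas : Measurable g := hganti.measurable
  have hg01 : ∀ x, 0 ≤ g x ∧ g x ≤ 1 := by
    intro x
    refine ⟨ENNReal.toReal_nonneg, ?_⟩
    have := prob_le_one (μ := P) (s := {ω | x < Z ω})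
    calc g x ≤ (1 : ENNReal).toReal := ENNReal.toReal_mono ENNReal.one_ne_top this
    _ = 1 := by simp
  have hg0 : ∀ x ∈ Set.Ioi (1:ℝ), g x = 0 := by
    intro x hx
    have : {ω | x < Z ω} = ∅ := by
      ext ω; simp only [Set.mem_setOf_eq, Set.mem_empty_iff_false, iff_false, not_lt]
      exact le_trans (hZ ω).2 (le_of_lt hx)
    rw [hgdef]; simp [this]
  -- integrability of g on finite intervals
  have hgint : ∀ s : Set ℝ, MeasurableSet s → s ⊆ Set.Ioc (0:ℝ) 1 → IntegrableOn g s := by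
    intro s hs hsub
    have hfin : volume s ≠ ⊤ := by
      refine ne_top_of_le_ne_top ?_ (measure_mono hsub)
      simp [Real.volume_Ioc]
    have hone : IntegrableOn (fun _ : ℝ => (1:ℝ)) s := by
      exact (integrableOn_const_iff (by simp)).mpr (Or.inr hfin.lt_top)
    refine Integrable.mono' hone hgmeas.aestronglyMeasurable.restrict ?_
    filter_upwards with x
    rw [Real.norm_eq_abs, abs_of_nonneg (hg01 x).1]
    exact (hg01 x).2
  have hgintIoi1 : IntegrableOn g (Set.Ioi (1:ℝ)) := by
    rw [integrableOn_congr_fun hg0 measurableSet_Ioi]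
    exact integrableOn_zero
  -- integrability of Z and layer cake
  have hZint : Integrable Z P := by
    refine Integrable.mono' (integrable_const (1:ℝ)) hZmeas.aestronglyMeasurable ?_
    filter_upwards with ω
    rw [Real.norm_eq_abs, abs_of_nonneg (hZ ω).1]; exact (hZ ω).2
  have hlayer : ∫ ω, Z ω ∂P = ∫ x in Set.Ioi (0:ℝ), g x :=
    hZint.integral_eq_integral_meas_lt (Filter.Eventually.of_forall fun ω => (hZ ω).1)
  -- split the integral
  have hsplit1 : ∫ x in Set.Ioi (0:ℝ), g x
      = (∫ x in Set.Ioc (0:ℝ) 1, g x) + ∫ x in Set.Ioi (1:ℝ), g x := by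
    rw [← setIntegral_union (Set.Ioc_disjoint_Ioi le_rfl) measurableSet_Ioi
      (hgint _ measurableSet_Ioc subset_rfl) hgintIoi1,
      Set.Ioc_union_Ioi_eq_Ioi zero_le_one]
  have hzero : ∫ x in Set.Ioi (1:ℝ), g x = 0 := by
    rw [setIntegral_congr_fun measurableSet_Ioi hg0, integral_zero]
  have hsplit2 : ∫ x in Set.Ioc (0:ℝ) 1, g x
      = (∫ x in Set.Ioc (0:ℝ) δ₀, g x) + ∫ x in Set.Ioc δ₀ 1, g x := by
    rw [← setIntegral_union (Set.Ioc_disjoint_Ioc_of_le le_rfl) measurableSet_Ioc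
      (hgint _ measurableSet_Ioc (Set.Ioc_subset_Ioc le_rfl hδ₀1))
      (hgint _ measurableSet_Ioc (Set.Ioc_subset_Ioc hδ₀0.le le_rfl)),
      Set.Ioc_union_Ioc_eq_Ioc hδ₀0.le hδ₀1]
  -- bound the first piece by δ₀
  have hpiece1 : ∫ x in Set.Ioc (0:ℝ) δ₀, g x ≤ δ₀ := by
    calc ∫ x in Set.Ioc (0:ℝ) δ₀, g x
        ≤ ∫ _x in Set.Ioc (0:ℝ) δ₀, (1:ℝ) := by
          have hone : IntegrableOn (fun _ : ℝ => (1:ℝ)) (Set.Ioc (0:ℝ) δ₀) := by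
            exact (integrableOn_const_iff (by simp)).mpr (Or.inr (by simp [Real.volume_Ioc]))
          refine setIntegral_mono_on (hgint _ measurableSet_Ioc
            (Set.Ioc_subset_Ioc le_rfl hδ₀1)) hone measurableSet_Ioc ?_
          intro x _; exact (hg01 x).2
      _ = δ₀ := by
          rw [setIntegral_const]
          simp [Real.volume_Ioc, ENNReal.toReal_ofReal hδ₀0.le, hδ₀0.le]
  -- constants
  set a : ℝ := 2 * η * pstar * T with hadef
  have ha0 : 0 < a := by positivity
  set C₁ : ℝ := 2 * m / ((1 - Real.exp (-2)) * T) with hC₁def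
  have hexp2 : Real.exp (-2) < 1 := Real.exp_lt_one_iff.mpr (by norm_num)
  have hden0 : 0 < 1 - Real.exp (-2) := by linarith
  -- pointwise bound on (δ₀, 1]
  have hpt : ∀ x ∈ Set.Ioc δ₀ 1, g x ≤ C₁ + 2 * m * Real.exp (-a * x ^ 2) := by
    intro x hx
    obtain ⟨hxl, hxr⟩ := hx
    have hx0 : 0 < x := lt_trans hδ₀0 hxl
    have hB := htail x ⟨hx0, hxr⟩
    -- first term: denominator bound
    have hchord : (1 - Real.exp (-2)) * T⁻¹ ≤ 1 - Real.exp (-2 * δ₀ ^ 2) := by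
      have h := chord_bound (δ₀ ^ 2) (by positivity) (by nlinarith)
      rw [hδ₀sq] at h
      rw [hδ₀sq]
      exact h
    have hmono : Real.exp (-2 * x ^ 2) ≤ Real.exp (-2 * δ₀ ^ 2) := by
      apply Real.exp_le_exp.mpr; nlinarith
    have hdx : (1 - Real.exp (-2)) * T⁻¹ ≤ 1 - Real.exp (-2 * x ^ 2) := by linarith
    have hdx0 : 0 < 1 - Real.exp (-2 * x ^ 2) := by
      have : 0 < (1 - Real.exp (-2)) * T⁻¹ := by positivity
      linarith
    have hfirst : 2 * (m:ℝ) / (T ^ 2 * (1 - Real.exp (-2 * x ^ 2))) ≤ C₁ := by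
      rw [hC₁def]
      apply div_le_div_of_nonneg_left (by positivity) (by positivity)
      have h1 : (1 - Real.exp (-2)) * T = T ^ 2 * ((1 - Real.exp (-2)) * T⁻¹) := by
        field_simp
      rw [h1]
      exact mul_le_mul_of_nonneg_left hdx (by positivity)
    have hsecond : 2 * (m:ℝ) * Real.exp (-2 * x ^ 2 * η * pstar * T)
        = 2 * m * Real.exp (-a * x ^ 2) := by
      congr 1; congr 1; ring
    have hBnn : 0 ≤ 2 * (m:ℝ) / (T ^ 2 * (1 - Real.exp (-2 * x ^ 2)))
        + 2 * m * Real.exp (-2 * x ^ 2 * η * pstar * T) := by positivity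
    have hg_le : g x ≤ 2 * (m:ℝ) / (T ^ 2 * (1 - Real.exp (-2 * x ^ 2)))
        + 2 * m * Real.exp (-2 * x ^ 2 * η * pstar * T) := by
      have h1 : P {ω | x < Z ω} ≤ P {ω | x ≤ Z ω} :=
        measure_mono fun ω (hω : x < Z ω) => le_of_lt hω
      have h2 := le_trans h1 hB
      calc g x ≤ (ENNReal.ofReal (2 * m / (T ^ 2 * (1 - Real.exp (-2 * x ^ 2))) +
            2 * m * Real.exp (-2 * x ^ 2 * η * pstar * T))).toReal :=
          ENNReal.toReal_mono ENNReal.ofReal_ne_top h2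
        _ = _ := ENNReal.toReal_ofReal hBnn
    calc g x ≤ _ := hg_le
      _ ≤ C₁ + 2 * m * Real.exp (-2 * x ^ 2 * η * pstar * T) := by linarith
      _ = C₁ + 2 * m * Real.exp (-a * x ^ 2) := by rw [hsecond]
  -- integrability of the bounding function
  have hexpint : Integrable (fun x : ℝ => 2 * (m:ℝ) * Real.exp (-a * x ^ 2)) :=
    (integrable_exp_neg_mul_sq ha0).const_mul _
  have hCint : IntegrableOn (fun _ : ℝ => C₁) (Set.Ioc δ₀ 1) := by
    exact (integrableOn_const_iff (by simp)).mpr (Or.inr measure_Ioc_lt_top)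
  have hbint : IntegrableOn (fun x => C₁ + 2 * (m:ℝ) * Real.exp (-a * x ^ 2))
      (Set.Ioc δ₀ 1) := by
    apply Integrable.add
    · exact hCint
    · exact hexpint.integrableOn
  -- bound the second piece
  have hpiece2 : ∫ x in Set.Ioc δ₀ 1, g x ≤ C₁ + m * Real.sqrt (π / a) := by
    calc ∫ x in Set.Ioc δ₀ 1, g x
        ≤ ∫ x in Set.Ioc δ₀ 1, (C₁ + 2 * m * Real.exp (-a * x ^ 2)) :=
          setIntegral_mono_on (hgint _ measurableSet_Ioc
            (Set.Ioc_subset_Ioc hδ₀0.le le_rfl)) hbint measurableSet_Ioc hpt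
      _ = (volume (Set.Ioc δ₀ 1)).toReal * C₁
            + ∫ x in Set.Ioc δ₀ 1, 2 * m * Real.exp (-a * x ^ 2) := by
          rw [integral_add hCint hexpint.integrableOn,
            setIntegral_const, smul_eq_mul, measureReal_def]
      _ ≤ 1 * C₁ + ∫ x in Set.Ioi 0, 2 * m * Real.exp (-a * x ^ 2) := by
          have h1 : (volume (Set.Ioc δ₀ 1)).toReal ≤ 1 := by
            rw [Real.volume_Ioc]
            rw [ENNReal.toReal_ofReal (by linarith)]
            linarith
          have hC₁0 : 0 ≤ C₁ := by positivity
          have h2 : ∫ x in Set.Ioc δ₀ 1, 2 * (m:ℝ) * Real.exp (-a * x ^ 2)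
              ≤ ∫ x in Set.Ioi 0, 2 * m * Real.exp (-a * x ^ 2) := by
            refine setIntegral_mono_set hexpint.integrableOn ?_ ?_
            · filter_upwards with x; positivity
            · exact Filter.Eventually.of_forall
                (Set.Ioc_subset_Ioi_self.trans (Set.Ioi_subset_Ioi hδ₀0.le))
          nlinarith [mul_le_mul_of_nonneg_right h1 hC₁0]
      _ = C₁ + m * Real.sqrt (π / a) := by
          rw [one_mul, integral_const_mul, integral_gaussian_Ioi]; ring
  -- put everything together
  have hkey : ∫ ω, Z ω ∂P ≤ δ₀ + (C₁ + m * Real.sqrt (π / a)) := by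
    rw [hlayer, hsplit1, hzero, add_zero, hsplit2]
    linarith
  -- rewrite the RHS of the goal
  have hrpow : T ^ (-(1:ℝ) / 2) = δ₀ := by
    rw [neg_div, Real.rpow_neg hT0.le, ← Real.sqrt_eq_rpow]
  have hsqrt_split : Real.sqrt (π / a) = Real.sqrt (π / (2 * η * pstar)) * δ₀ := by
    rw [hadef, hδ₀def, ← Real.sqrt_inv, ← Real.sqrt_mul (by positivity)]
    congr 1; field_simp; try ring
  have hS1 : (1:ℝ) ≤ Real.sqrt (π / (2 * η * pstar)) := by
    rw [show (1:ℝ) = Real.sqrt 1 by simp]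
    apply Real.sqrt_le_sqrt
    rw [le_div_iff₀ (by positivity)]
    nlinarith [Real.pi_gt_three]
  -- numeric bound on C₁
  have hC₁bound : C₁ ≤ (7/3) * m * δ₀ := by
    have hexp2' : Real.exp (-2) ≤ 1/7 := by
      have h1 : Real.exp 1 ≥ 2.7 := by
        have := Real.exp_one_gt_d9; linarith
      have h2 : (7 : ℝ) ≤ Real.exp 2 := by
        rw [show (2:ℝ) = 1 + 1 by norm_num, Real.exp_add]; nlinarith
      rw [Real.exp_neg]
      calc (Real.exp 2)⁻¹ ≤ 7⁻¹ := by
            apply inv_anti₀ (by norm_num) h2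
        _ = 1/7 := by norm_num
    have hδ₀T : 1 ≤ δ₀ * T := by
      rw [hδ₀def]
      rw [show (Real.sqrt T)⁻¹ * T = T / Real.sqrt T by ring,
        Real.div_sqrt]
      exact hsT1
    rw [hC₁def, div_le_iff₀ (by positivity)]
    have hA : 2*(m:ℝ) ≤ 2*m*(δ₀*T) := by nlinarith [hδ₀T, hm1]
    have hB : 2*(m:ℝ)*(δ₀*T) ≤ 7/3*m*δ₀*((1-Real.exp (-2))*T) := by
      nlinarith [mul_le_mul_of_nonneg_right
        (show (2:ℝ) ≤ 7/3*(1-Real.exp (-2)) by linarith)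
        (show (0:ℝ) ≤ (m:ℝ)*(δ₀*T) by positivity)]
    linarith
  rw [hsqrt_split] at hkey
  rw [hrpow]
  set S := Real.sqrt (π / (2 * η * pstar)) with hSdef
  have h1 : δ₀ ≤ m * δ₀ := le_mul_of_one_le_left hδ₀0.le hm1
  have h2 : (m:ℝ) * δ₀ ≤ m * (S * δ₀) := by nlinarith [hδ₀0.le, hS1, hm1]
  calc ∫ ω, Z ω ∂P ≤ δ₀ + (C₁ + m * (S * δ₀)) := hkey
    _ ≤ δ₀ * (2 * m * S + 3 * m) := by nlinarith [hδ₀0.le, hm1, hS1, hC₁bound, h1, h2]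
end

section
/- Let m ≥ 1 be a natural number, η ∈ (0,1), p* ∈ (0,1], and let t ≥ 1 be a natural number. Let Z be a random variable taking values in [0,1] such that for all δ ∈ (0,1], Pr(Z ≥ δ) ≤ (3 + e^{2δ})·m·(1/(t²(1 - e^{-δ²/2})) + e^{-δ²·η·p*·t/2}). Then E[Z] ≤ (3 + e²)·m·t^{-1/2}·(√(2π/(η·p*)) + 3). -/
open MeasureTheory Real


private lemma aux_exp_low {x : ℝ} (hx0 : 0 ≤ x) (hx1 : x ≤ 1/2) :
    x / 2 ≤ 1 - Real.exp (-x) := by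
  have h1 : Real.exp (-x) * (1 + x) ≤ 1 := by
    have h2 := Real.add_one_le_exp x
    have he := (Real.exp_pos (-x)).le
    calc Real.exp (-x) * (1 + x) ≤ Real.exp (-x) * Real.exp x :=
          mul_le_mul_of_nonneg_left (by linarith) he
      _ = 1 := by rw [← Real.exp_add]; simp
  have he2 : (1:ℝ)/2 ≤ Real.exp (-x) := by
    have h4 : Real.exp (-x) * Real.exp x = 1 := by
      rw [← Real.exp_add]; simp
    have h5 : Real.exp x ≤ 2 := by
      have h6 : Real.exp x ≤ Real.exp (1/2) := Real.exp_le_exp.2 hx1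
      have h7 : Real.exp (1/2) * Real.exp (1/2) = Real.exp 1 := by
        rw [← Real.exp_add]; norm_num
      have h8 : Real.exp 1 < 4 := lt_trans Real.exp_one_lt_d9 (by norm_num)
      nlinarith [Real.exp_pos ((1:ℝ)/2)]
    nlinarith [Real.exp_pos x, Real.exp_pos (-x)]
  nlinarith

private lemma aux_exp2 : (7:ℝ) ≤ Real.exp 2 := by
  have h1 : (2.7182818283 : ℝ) < Real.exp 1 := Real.exp_one_gt_d9
  have h2 : Real.exp 2 = Real.exp 1 * Real.exp 1 := by
    rw [← Real.exp_add]; norm_num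
  nlinarith

set_option maxHeartbeats 1000000 in

/-- If `Z ∈ [0,1]` satisfies, for all `δ ∈ (0,1]`,
`Pr(Z ≥ δ) ≤ (3+e^{2δ})m(1/(t²(1-e^{-δ²/2})) + e^{-δ²ηp*t/2})`, then
`E[Z] ≤ (3+e²) m t^{-1/2}(√(2π/(ηp*)) + 3)`. -/
theorem stmt16 {Ω : Type*} [MeasurableSpace Ω] (P : Measure Ω) [IsProbabilityMeasure P]
    (m : ℕ) (hm : 1 ≤ m) (η pstar : ℝ)
    (hη : η ∈ Set.Ioo (0 : ℝ) 1) (hp : pstar ∈ Set.Ioc (0 : ℝ) 1)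
    (t : ℕ) (ht : 1 ≤ t)
    (Z : Ω → ℝ) (hZmeas : Measurable Z) (hZ : ∀ ω, Z ω ∈ Set.Icc (0 : ℝ) 1)
    (htail : ∀ δ : ℝ, δ ∈ Set.Ioc (0 : ℝ) 1 →
      P {ω | δ ≤ Z ω} ≤ ENNReal.ofReal
        ((3 + Real.exp (2 * δ)) * m *
          (1 / ((t : ℝ) ^ 2 * (1 - Real.exp (-δ ^ 2 / 2))) +
            Real.exp (-δ ^ 2 * η * pstar * t / 2)))) :
    ∫ ω, Z ω ∂P ≤
      (3 + Real.exp 2) * m * ((t : ℝ) ^ (-(1 : ℝ) / 2)) *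
        (Real.sqrt (2 * π / (η * pstar)) + 3) := by
  obtain ⟨hη0, hη1⟩ := hη
  obtain ⟨hp0, hp1⟩ := hp
  set T : ℝ := (t : ℝ) with hTdef
  have hT1 : (1 : ℝ) ≤ T := Nat.one_le_cast.mpr ht
  have hT0 : (0 : ℝ) < T := lt_of_lt_of_le one_pos hT1
  set d : ℝ := T ^ (-(1 : ℝ) / 2) with hddef
  have hd0 : 0 < d := Real.rpow_pos_of_pos hT0 _
  have hd1 : d ≤ 1 := Real.rpow_le_one_of_one_le_of_nonpos hT1 (by norm_num)
  have hTinv : T⁻¹ = T ^ (-1 : ℝ) := (Real.rpow_neg_one T).symm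
  have hd_eq : d = Real.sqrt T⁻¹ := by
    rw [hddef, Real.sqrt_eq_rpow, hTinv, ← Real.rpow_mul hT0.le]
    congr 1
    norm_num
  have hdsq : d ^ 2 = T⁻¹ := by
    rw [hd_eq, Real.sq_sqrt (by positivity)]
  have hinv_le_d : T⁻¹ ≤ d := by
    rw [hTinv, hddef]
    exact Real.rpow_le_rpow_of_exponent_le hT1 (by norm_num)
  -- the tail function
  set g : ℝ → ℝ := fun s => (P {ω | s ≤ Z ω}).toReal with hgdef
  have hg_anti : Antitone g := by
    intro s s' hss'
    apply ENNReal.toReal_mono (measure_ne_top _ _)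
    exact measure_mono (fun ω hω => le_trans hss' hω)
  have hg_le_one : ∀ s, g s ≤ 1 := by
    intro s
    have h1 : P {ω | s ≤ Z ω} ≤ 1 := prob_le_one
    simpa using ENNReal.toReal_mono (by norm_num) h1
  have hg_nonneg : ∀ s, 0 ≤ g s := fun s => ENNReal.toReal_nonneg
  have hZint : Integrable Z P := by
    refine Integrable.mono' (integrable_const 1) hZmeas.aestronglyMeasurable ?_
    filter_upwards with ω
    rw [Real.norm_eq_abs, abs_le]
    exact ⟨le_trans (by norm_num) (hZ ω).1, (hZ ω).2⟩
  have hlc : ∫ ω, Z ω ∂P = ∫ s in Set.Ioc (0:ℝ) 1, g s :=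
    hZint.integral_eq_integral_Ioc_meas_le
      (Filter.Eventually.of_forall fun ω => (hZ ω).1)
      (Filter.Eventually.of_forall fun ω => (hZ ω).2)
  have hgint : IntegrableOn g (Set.Ioc (0:ℝ) 1) := by
    refine Integrable.mono' (integrable_const 1)
      (hg_anti.measurable.aestronglyMeasurable) ?_
    filter_upwards with s
    rw [Real.norm_eq_abs, abs_of_nonneg (hg_nonneg s)]
    exact hg_le_one s
  -- split the integral
  have hsplit : ∫ s in Set.Ioc (0:ℝ) 1, g s
      = (∫ s in Set.Ioc (0:ℝ) d, g s) + ∫ s in Set.Ioc d 1, g s := by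
    rw [← setIntegral_union (Set.Ioc_disjoint_Ioc_of_le le_rfl) measurableSet_Ioc
      (hgint.mono_set (Set.Ioc_subset_Ioc le_rfl hd1))
      (hgint.mono_set (Set.Ioc_subset_Ioc hd0.le le_rfl)),
      Set.Ioc_union_Ioc_eq_Ioc hd0.le hd1]
  -- part 1
  have hpart1 : ∫ s in Set.Ioc (0:ℝ) d, g s ≤ d := by
    have h1 : ∫ s in Set.Ioc (0:ℝ) d, g s ≤ ∫ _ in Set.Ioc (0:ℝ) d, (1:ℝ) := by
      refine setIntegral_mono_on (hgint.mono_set (Set.Ioc_subset_Ioc le_rfl hd1))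
        (integrableOn_const measure_Ioc_lt_top.ne) measurableSet_Ioc ?_
      intro s _
      exact hg_le_one s
    refine le_trans h1 ?_
    rw [setIntegral_const, measureReal_def, Real.volume_Ioc, smul_eq_mul, mul_one,
      ENNReal.toReal_ofReal (by linarith)]
    simp
  -- constants
  set K : ℝ := (3 + Real.exp 2) * m with hKdef
  set c : ℝ := η * pstar * T / 2 with hcdef
  have hc0 : 0 < c := by rw [hcdef]; positivity
  set S : ℝ := Real.sqrt (2 * π / (η * pstar)) with hSdef
  set B : ℝ → ℝ := fun δ => K * (4 / (T ^ 2 * δ ^ 2) + Real.exp (-c * δ ^ 2)) with hBdef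
  have hexp2 : (7:ℝ) ≤ Real.exp 2 := aux_exp2
  have hK10 : (10:ℝ) ≤ K := by
    have hm1 : (1:ℝ) ≤ (m:ℝ) := Nat.one_le_cast.mpr hm
    have h := mul_le_mul_of_nonneg_left hm1 (by linarith : (0:ℝ) ≤ 3 + Real.exp 2)
    rw [hKdef]; nlinarith
  have hS22 : (2.2:ℝ) ≤ S := by
    have hηp0 : 0 < η * pstar := mul_pos hη0 hp0
    have hηp1 : η * pstar ≤ 1 := by nlinarith
    have hpi : (3.14:ℝ) ≤ π := by linarith [Real.pi_gt_d6]
    have harg : (4.84:ℝ) ≤ 2 * π / (η * pstar) := by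
      rw [le_div_iff₀ hηp0]
      nlinarith [mul_le_mul_of_nonneg_left hηp1 (by norm_num : (0:ℝ) ≤ 4.84)]
    have h22 : (2.2:ℝ) = Real.sqrt 4.84 := by
      rw [show (4.84:ℝ) = 2.2 ^ 2 by norm_num, Real.sqrt_sq (by norm_num)]
    rw [hSdef, h22]
    exact Real.sqrt_le_sqrt harg
  -- pointwise tail bound
  have hptwise : ∀ δ ∈ Set.Ioc (0:ℝ) 1, g δ ≤ B δ := by
    intro δ hδ
    obtain ⟨hδ0, hδ1⟩ := hδ
    -- 1 - exp(-δ²/2) ≥ δ²/4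
    have hlow : δ ^ 2 / 4 ≤ 1 - Real.exp (-δ ^ 2 / 2) := by
      have hre : -δ ^ 2 / 2 = -(δ ^ 2 / 2) := by ring
      rw [hre]
      have := aux_exp_low (x := δ ^ 2 / 2) (by positivity) (by nlinarith)
      linarith
    have hden0 : 0 < 1 - Real.exp (-δ ^ 2 / 2) := lt_of_lt_of_le (by positivity) hlow
    have hXnn : 0 ≤ (3 + Real.exp (2 * δ)) * m *
          (1 / (T ^ 2 * (1 - Real.exp (-δ ^ 2 / 2))) +
            Real.exp (-δ ^ 2 * η * pstar * T / 2)) := by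
      have h9 : 0 < T ^ 2 * (1 - Real.exp (-δ ^ 2 / 2)) := by positivity
      positivity
    have h1 : g δ ≤ (3 + Real.exp (2 * δ)) * m *
          (1 / (T ^ 2 * (1 - Real.exp (-δ ^ 2 / 2))) +
            Real.exp (-δ ^ 2 * η * pstar * T / 2)) := by
      exact ENNReal.toReal_le_of_le_ofReal hXnn (htail δ ⟨hδ0, hδ1⟩)
    refine le_trans h1 ?_
    rw [hBdef, hKdef]
    have hm0 : (0:ℝ) ≤ (m:ℝ) := Nat.cast_nonneg m
    have hfac : 3 + Real.exp (2 * δ) ≤ 3 + Real.exp 2 := by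
      have h10 : Real.exp (2*δ) ≤ Real.exp 2 := Real.exp_le_exp.2 (by nlinarith)
      linarith
    have hterm1 : 1 / (T ^ 2 * (1 - Real.exp (-δ ^ 2 / 2))) ≤ 4 / (T ^ 2 * δ ^ 2) := by
      rw [div_le_div_iff₀ (by positivity) (by positivity)]
      nlinarith [sq_nonneg T]
    have hterm2 : Real.exp (-δ ^ 2 * η * pstar * T / 2) = Real.exp (-c * δ ^ 2) := by
      rw [hcdef]; ring_nf
    have hsum : 1 / (T ^ 2 * (1 - Real.exp (-δ ^ 2 / 2))) +
            Real.exp (-δ ^ 2 * η * pstar * T / 2)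
        ≤ 4 / (T ^ 2 * δ ^ 2) + Real.exp (-c * δ ^ 2) := by
      rw [hterm2]; linarith
    have hsumnn : 0 ≤ 1 / (T ^ 2 * (1 - Real.exp (-δ ^ 2 / 2))) +
            Real.exp (-δ ^ 2 * η * pstar * T / 2) := by positivity
    calc (3 + Real.exp (2 * δ)) * m *
          (1 / (T ^ 2 * (1 - Real.exp (-δ ^ 2 / 2))) +
            Real.exp (-δ ^ 2 * η * pstar * T / 2))
        ≤ (3 + Real.exp 2) * m *
          (1 / (T ^ 2 * (1 - Real.exp (-δ ^ 2 / 2))) +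
            Real.exp (-δ ^ 2 * η * pstar * T / 2)) :=
          mul_le_mul_of_nonneg_right (mul_le_mul_of_nonneg_right hfac hm0) hsumnn
      _ ≤ (3 + Real.exp 2) * m * (4 / (T ^ 2 * δ ^ 2) + Real.exp (-c * δ ^ 2)) := by
          apply mul_le_mul_of_nonneg_left hsum
          positivity
  -- integrability of the pieces
  have hf1int : IntegrableOn (fun δ : ℝ => 4 / (T ^ 2 * δ ^ 2)) (Set.Ioc d 1) := by
    have hcont : ContinuousOn (fun δ : ℝ => 4 / (T ^ 2 * δ ^ 2)) (Set.Icc d 1) := by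
      apply ContinuousOn.div continuousOn_const
      · fun_prop
      · intro x hx
        have hx0 : 0 < x := lt_of_lt_of_le hd0 hx.1
        positivity
    exact hcont.integrableOn_Icc.mono_set Set.Ioc_subset_Icc_self
  have hf2int : IntegrableOn (fun δ : ℝ => Real.exp (-c * δ ^ 2)) (Set.Ioc d 1) :=
    (integrable_exp_neg_mul_sq hc0).integrableOn
  have hBint : IntegrableOn B (Set.Ioc d 1) := (hf1int.add hf2int).const_mul K
  -- part 2
  have hpart2 : ∫ s in Set.Ioc d 1, g s ≤ K * (4 * d + S * d / 2) := by
    have hmono : ∫ s in Set.Ioc d 1, g s ≤ ∫ s in Set.Ioc d 1, B s := by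
      refine setIntegral_mono_on (hgint.mono_set (Set.Ioc_subset_Ioc hd0.le le_rfl))
        hBint measurableSet_Ioc ?_
      intro s hs
      exact hptwise s ⟨lt_trans hd0 hs.1, hs.2⟩
    refine le_trans hmono ?_
    have hBsplit : ∫ s in Set.Ioc d 1, B s
        = K * ((∫ s in Set.Ioc d 1, 4 / (T ^ 2 * s ^ 2))
            + ∫ s in Set.Ioc d 1, Real.exp (-c * s ^ 2)) := by
      simp only [hBdef]
      rw [integral_const_mul]
      congr 1
      exact integral_add hf1int hf2int
    rw [hBsplit]
    have hI1 : ∫ s in Set.Ioc d 1, 4 / (T ^ 2 * s ^ 2) ≤ 4 * d := by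
      have hb : ∀ s ∈ Set.Ioc d 1, 4 / (T ^ 2 * s ^ 2) ≤ 4 / T := by
        intro s hs
        have hs0 : d ≤ s := hs.1.le
        have hds : d ^ 2 ≤ s ^ 2 := by nlinarith
        have hspos : 0 < s := lt_of_lt_of_le hd0 hs0
        rw [div_le_div_iff₀ (mul_pos (pow_pos hT0 2) (pow_pos hspos 2)) hT0]
        have hTT : T = T ^ 2 * T⁻¹ := by field_simp
        calc 4 * T = 4 * (T ^ 2 * T⁻¹) := by rw [← hTT]
          _ = 4 * (T ^ 2 * d ^ 2) := by rw [hdsq]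
          _ ≤ 4 * (T ^ 2 * s ^ 2) := by nlinarith [sq_nonneg T]
      have h11 : ∫ s in Set.Ioc d 1, 4 / (T ^ 2 * s ^ 2) ≤ ∫ _ in Set.Ioc d 1, (4 / T) :=
        setIntegral_mono_on hf1int
          (integrableOn_const measure_Ioc_lt_top.ne) measurableSet_Ioc hb
      refine le_trans h11 ?_
      rw [setIntegral_const, measureReal_def, Real.volume_Ioc, smul_eq_mul]
      have hvol : (ENNReal.ofReal (1 - d)).toReal ≤ 1 := by
        rcases le_or_gt (1 - d) 0 with h | h
        · rw [ENNReal.ofReal_eq_zero.2 h]; norm_num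
        · rw [ENNReal.toReal_ofReal h.le]; linarith
      have h4T : 4 / T ≤ 4 * d := by
        rw [div_le_iff₀ hT0]
        have := mul_le_mul_of_nonneg_left hinv_le_d (by norm_num : (0:ℝ) ≤ 4)
        calc (4:ℝ) = 4 * T⁻¹ * T := by field_simp
          _ ≤ 4 * d * T := by nlinarith
      have h4Tnn : 0 ≤ 4 / T := by positivity
      nlinarith [ENNReal.toReal_nonneg (a := ENNReal.ofReal (1 - d)),
        mul_nonneg (sub_nonneg.mpr hvol) h4Tnn]
    have hI2 : ∫ s in Set.Ioc d 1, Real.exp (-c * s ^ 2) ≤ S * d / 2 := by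
      have hsub : Set.Ioc d 1 ⊆ Set.Ioi (0:ℝ) := fun x hx => lt_of_lt_of_le hd0 hx.1.le
      have h12 : ∫ s in Set.Ioc d 1, Real.exp (-c * s ^ 2)
          ≤ ∫ s in Set.Ioi (0:ℝ), Real.exp (-c * s ^ 2) := by
        refine setIntegral_mono_set (integrable_exp_neg_mul_sq hc0).integrableOn ?_
          (HasSubset.Subset.eventuallyLE hsub)
        filter_upwards with s using (Real.exp_pos _).le
      rw [integral_gaussian_Ioi c] at h12
      refine le_trans h12 ?_
      have hπc : π / c = 2 * π / (η * pstar) * T⁻¹ := by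
        rw [hcdef]; field_simp
      rw [hπc, Real.sqrt_mul (by positivity), ← hSdef, ← hd_eq]
      -- closed by rfl of rw if possible
    have hKnn : (0:ℝ) ≤ K := by linarith
    have hsum2 : (∫ s in Set.Ioc d 1, 4 / (T ^ 2 * s ^ 2))
        + (∫ s in Set.Ioc d 1, Real.exp (-c * s ^ 2)) ≤ 4 * d + S * d / 2 := by
      linarith
    exact mul_le_mul_of_nonneg_left hsum2 hKnn
  -- put it all together
  have htotal : ∫ ω, Z ω ∂P ≤ d + K * (4 * d + S * d / 2) := by
    rw [hlc, hsplit]; linarith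
  refine le_trans htotal ?_
  have hgoal : K * d * (S + 3) - (d + K * (4 * d + S * d / 2))
      = (K * (S - 2.2)) * d / 2 + (K - 10) * d / 10 := by ring
  have h1 : 0 ≤ (K * (S - 2.2)) * d := by
    apply mul_nonneg (mul_nonneg (by linarith) (by linarith)) hd0.le
  have h2 : 0 ≤ (K - 10) * d := mul_nonneg (by linarith) hd0.le
  linarith
end

section
/- Let t ≥ 1 be a natural number, η ∈ (0,1), p* ∈ (0,1], and δ > 0. Let N and s be random variables taking values in the natural numbers with s ≤ N ≤ t almost surely, and let ν be a random variable taking values in [0,1] such that for all integers j, k with 0 ≤ k ≤ j ≤ t and Pr(N = j, s = k) > 0, and every measurable set U ⊆ [0,1], Pr({ν ∈ U} ∩ {N = j, s = k}) = Pr(N = j, s = k) · Beta(k+1, j-k+1)(U). Define μ̂ = s/N on the event {N ≥ 1} and μ̂ = 1 on {N = 0}. Suppose Pr(N = j) ≤ 1/t² for every integer j with 0 ≤ j ≤ η·p*·t. Then Pr(|ν - μ̂| ≥ δ/2) ≤ (e^{2δ} + 1)·(1/(t²(1 - e^{-δ²/2})) + e^{-δ²·η·p*·t/2}). -/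
open MeasureTheory

section AuxCTS
open Real Finset MeasureTheory intervalIntegral
open scoped ENNReal


lemma bern_mgf {y : ℝ} (h0 : 0 ≤ y) (h1 : y ≤ 1) (c : ℝ) :
    1 - y + y * Real.exp c ≤ Real.exp (c * y + c ^ 2 / 8) := by
  -- φ c = 1 - y + y * exp c > 0
  have hφpos : ∀ x : ℝ, 0 < 1 - y + y * Real.exp x := by
    intro x
    rcases eq_or_lt_of_le h1 with h | h
    · simp [← h]; positivity
    · have : 0 ≤ y * Real.exp x := by positivity
      linarith
  set φ : ℝ → ℝ := fun x => 1 - y + y * Real.exp x with hφ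
  set f : ℝ → ℝ := fun x => x * y + x ^ 2 / 8 - Real.log (φ x) with hf
  set f' : ℝ → ℝ := fun x => y + x / 4 - y * Real.exp x / φ x with hf'
  have hφd : ∀ x, HasDerivAt φ (y * Real.exp x) x := by
    intro x
    simpa [hφ] using ((Real.hasDerivAt_exp x).const_mul y).const_add (1 - y)
  have hfd : ∀ x, HasDerivAt f (f' x) x := by
    intro x
    have h1' : HasDerivAt (fun x : ℝ => x * y + x ^ 2 / 8) (y + x / 4) x := by
      have := ((hasDerivAt_id x).mul_const y).add
        (((hasDerivAt_pow 2 x)).div_const 8)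
      refine this.congr_deriv ?_
      simp only [Nat.cast_ofNat, one_mul, show (2:ℕ) - 1 = 1 from rfl, pow_one]; ring
    have h2 : HasDerivAt (fun x => Real.log (φ x)) (y * Real.exp x / φ x) x :=
      (hφd x).log (ne_of_gt (hφpos x))
    simpa [hf, hf', Pi.sub_def] using h1'.sub h2
  have hf'd : ∀ x, HasDerivAt f' (1 / 4 - y * Real.exp x * (1 - y) / (φ x) ^ 2) x := by
    intro x
    have h1' : HasDerivAt (fun x : ℝ => y + x / 4) (1 / 4) x := by
      simpa using ((hasDerivAt_id x).div_const 4).const_add y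
    have hn : HasDerivAt (fun x => y * Real.exp x) (y * Real.exp x) x :=
      (Real.hasDerivAt_exp x).const_mul y
    have h2 : HasDerivAt (fun x => y * Real.exp x / φ x)
        ((y * Real.exp x * φ x - y * Real.exp x * (y * Real.exp x)) / (φ x) ^ 2) x :=
      hn.div (hφd x) (ne_of_gt (hφpos x))
    have : HasDerivAt f' (1 / 4 -
        (y * Real.exp x * φ x - y * Real.exp x * (y * Real.exp x)) / (φ x) ^ 2) x := by
      simpa [hf', Pi.sub_def] using h1'.sub h2
    convert this using 1
    have := hφpos x
    field_simp
    ring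
  have hf''nonneg : ∀ x, 0 ≤ 1 / 4 - y * Real.exp x * (1 - y) / (φ x) ^ 2 := by
    intro x
    rw [sub_nonneg, div_le_iff₀ (pow_pos (hφpos x) 2)]
    have hy : 0 ≤ y * Real.exp x := by positivity
    nlinarith [sq_nonneg (1 - y - y * Real.exp x)]
  -- f' is monotone
  have hf'mono : Monotone f' := by
    have := monotone_of_deriv_nonneg (fun x => (hf'd x).differentiableAt) ?_
    · exact this
    · intro x; rw [(hf'd x).deriv]; exact hf''nonneg x
  have hf'0 : f' 0 = 0 := by
    simp [hf', hφ]
  have hf0 : f 0 = 0 := by simp [hf, hφ]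
  -- f x ≥ 0 for all x
  have hfnonneg : ∀ x, 0 ≤ f x := by
    intro x
    rcases le_total 0 x with hx | hx
    · have : MonotoneOn f (Set.Ici 0) := by
        apply monotoneOn_of_deriv_nonneg (convex_Ici 0)
          (fun z _ => ((hfd z).differentiableAt).continuousAt.continuousWithinAt)
          (fun z _ => ((hfd z).differentiableAt).differentiableWithinAt)
        intro z hz
        rw [(hfd z).deriv]
        rw [interior_Ici] at hz
        have : f' 0 ≤ f' z := hf'mono (le_of_lt hz)
        linarith [hf'0 ▸ this]
      have := this (Set.self_mem_Ici) (Set.mem_Ici.2 hx) hx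
      rw [hf0] at this; exact this
    · have : AntitoneOn f (Set.Iic 0) := by
        apply antitoneOn_of_deriv_nonpos (convex_Iic 0)
          (fun z _ => ((hfd z).differentiableAt).continuousAt.continuousWithinAt)
          (fun z _ => ((hfd z).differentiableAt).differentiableWithinAt)
        intro z hz
        rw [(hfd z).deriv]
        rw [interior_Iic] at hz
        have : f' z ≤ f' 0 := hf'mono (le_of_lt hz)
        linarith [hf'0 ▸ this]
      have := this (Set.mem_Iic.2 hx) Set.self_mem_Iic hx
      rw [hf0] at this; exact this
  have := hfnonneg c
  rw [hf, sub_nonneg] at this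
  calc φ c = Real.exp (Real.log (φ c)) := (Real.exp_log (hφpos c)).symm
    _ ≤ Real.exp (c * y + c ^ 2 / 8) := Real.exp_le_exp.2 this


lemma expand_mgf (n : ℕ) {y : ℝ} (c : ℝ) :
    ∑ i ∈ range (n + 1), Real.exp (c * i) * ((n.choose i : ℝ) * y ^ i * (1 - y) ^ (n - i))
      = (y * Real.exp c + (1 - y)) ^ n := by
  rw [add_pow]
  apply Finset.sum_congr rfl
  intro i _
  rw [mul_pow, ← Real.exp_nat_mul]
  rw [mul_comm c (i : ℝ)]
  ring

lemma chernoff_low (n k : ℕ) (hn : 1 ≤ n) (hkn : k ≤ n) {y : ℝ} (hy0 : 0 ≤ y) (hy1 : y ≤ 1)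
    (hk : (k : ℝ) ≤ n * y) :
    ∑ i ∈ range (k + 1), (n.choose i : ℝ) * y ^ i * (1 - y) ^ (n - i)
      ≤ Real.exp (-2 * ((n : ℝ) * y - k) ^ 2 / n) := by
  have hnpos : (0 : ℝ) < n := by exact_mod_cast hn
  have h1y : (0:ℝ) ≤ 1 - y := by linarith
  set c : ℝ := 4 * ((n : ℝ) * y - k) / n with hc
  have hc0 : 0 ≤ c := by
    apply div_nonneg _ (le_of_lt hnpos); linarith
  have hterm : ∀ i : ℕ, 0 ≤ (n.choose i : ℝ) * y ^ i * (1 - y) ^ (n - i) := by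
    intro i; positivity
  have step1 : ∑ i ∈ range (k + 1), (n.choose i : ℝ) * y ^ i * (1 - y) ^ (n - i)
      ≤ ∑ i ∈ range (n + 1),
          Real.exp (c * k) * (Real.exp (-c * i) * ((n.choose i : ℝ) * y ^ i * (1 - y) ^ (n - i))) := by
    apply le_trans (Finset.sum_le_sum (g := fun i : ℕ =>
        Real.exp (c * k) * (Real.exp (-c * i) * ((n.choose i : ℝ) * y ^ i * (1 - y) ^ (n - i)))) ?_)
      (Finset.sum_le_sum_of_subset_of_nonneg (Finset.range_subset_range.2 (by omega)) ?_)
    · intro i hi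
      have hik : (i : ℝ) ≤ k := by
        exact_mod_cast Nat.lt_succ_iff.1 (Finset.mem_range.1 hi)
      rw [← mul_assoc, ← Real.exp_add]
      have h1 : 1 ≤ Real.exp (c * k + -c * i) := by
        rw [Real.one_le_exp_iff]; nlinarith
      nlinarith [hterm i]
    · intro i _ _
      have := hterm i; positivity
  rw [← Finset.mul_sum, expand_mgf n (-c)] at step1
  have step2 : (y * Real.exp (-c) + (1 - y)) ^ n ≤ Real.exp ((-c) * y + c ^ 2 / 8) ^ n := by
    apply pow_le_pow_left₀
    · have : 0 ≤ y * Real.exp (-c) := by positivity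
      linarith
    · have := bern_mgf hy0 hy1 (-c)
      calc y * Real.exp (-c) + (1 - y) = 1 - y + y * Real.exp (-c) := by ring
        _ ≤ Real.exp ((-c) * y + (-c) ^ 2 / 8) := this
        _ = Real.exp ((-c) * y + c ^ 2 / 8) := by ring_nf
  calc ∑ i ∈ range (k + 1), (n.choose i : ℝ) * y ^ i * (1 - y) ^ (n - i)
      ≤ Real.exp (c * k) * (y * Real.exp (-c) + (1 - y)) ^ n := step1
    _ ≤ Real.exp (c * k) * Real.exp ((-c) * y + c ^ 2 / 8) ^ n := by
        apply mul_le_mul_of_nonneg_left step2 (le_of_lt (Real.exp_pos _))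
    _ = Real.exp (c * k + n * ((-c) * y + c ^ 2 / 8)) := by
        rw [← Real.exp_nat_mul, ← Real.exp_add]
    _ = Real.exp (-2 * ((n : ℝ) * y - k) ^ 2 / n) := by
        congr 1
        rw [hc]; field_simp; ring
    
lemma chernoff_high (n K : ℕ) (hn : 1 ≤ n) {y : ℝ} (hy0 : 0 ≤ y) (hy1 : y ≤ 1)
    (hK : (n : ℝ) * y ≤ K) :
    ∑ i ∈ Finset.Icc K n, (n.choose i : ℝ) * y ^ i * (1 - y) ^ (n - i)
      ≤ Real.exp (-2 * ((K : ℝ) - n * y) ^ 2 / n) := by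
  have hnpos : (0 : ℝ) < n := by exact_mod_cast hn
  have h1y : (0:ℝ) ≤ 1 - y := by linarith
  set c : ℝ := 4 * ((K : ℝ) - n * y) / n with hc
  have hc0 : 0 ≤ c := by
    apply div_nonneg _ (le_of_lt hnpos); linarith
  have hterm : ∀ i : ℕ, 0 ≤ (n.choose i : ℝ) * y ^ i * (1 - y) ^ (n - i) := by
    intro i; positivity
  have step1 : ∑ i ∈ Finset.Icc K n, (n.choose i : ℝ) * y ^ i * (1 - y) ^ (n - i)
      ≤ ∑ i ∈ range (n + 1),
          Real.exp (-c * K) * (Real.exp (c * i) * ((n.choose i : ℝ) * y ^ i * (1 - y) ^ (n - i))) := by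
    apply le_trans (Finset.sum_le_sum (g := fun i : ℕ =>
        Real.exp (-c * K) * (Real.exp (c * i) * ((n.choose i : ℝ) * y ^ i * (1 - y) ^ (n - i)))) ?_)
      (Finset.sum_le_sum_of_subset_of_nonneg ?_ ?_)
    · intro i hi
      have hik : (K : ℝ) ≤ i := by
        exact_mod_cast (Finset.mem_Icc.1 hi).1
      rw [← mul_assoc, ← Real.exp_add]
      have h1 : 1 ≤ Real.exp (-c * K + c * i) := by
        rw [Real.one_le_exp_iff]; nlinarith
      nlinarith [hterm i]
    · intro i hi
      rw [Finset.mem_range, Nat.lt_succ_iff]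
      exact (Finset.mem_Icc.1 hi).2
    · intro i _ _
      have := hterm i; positivity
  rw [← Finset.mul_sum, expand_mgf n c] at step1
  have step2 : (y * Real.exp c + (1 - y)) ^ n ≤ Real.exp (c * y + c ^ 2 / 8) ^ n := by
    apply pow_le_pow_left₀
    · have : 0 ≤ y * Real.exp c := by positivity
      linarith
    · have := bern_mgf hy0 hy1 c
      linarith
  calc ∑ i ∈ Finset.Icc K n, (n.choose i : ℝ) * y ^ i * (1 - y) ^ (n - i)
      ≤ Real.exp (-c * K) * (y * Real.exp c + (1 - y)) ^ n := step1
    _ ≤ Real.exp (-c * K) * Real.exp (c * y + c ^ 2 / 8) ^ n := by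
        apply mul_le_mul_of_nonneg_left step2 (le_of_lt (Real.exp_pos _))
    _ = Real.exp (-c * K + n * (c * y + c ^ 2 / 8)) := by
        rw [← Real.exp_nat_mul, ← Real.exp_add]
    _ = Real.exp (-2 * ((K : ℝ) - n * y) ^ 2 / n) := by
        congr 1
        rw [hc]; field_simp; ring


lemma ch1 (j k : ℕ) : ((j+1).choose (k+1) : ℝ) * (k+1) = (j+1) * (j.choose k) := by
  have := Nat.add_one_mul_choose_eq j k
  exact_mod_cast congrArg (Nat.cast (R := ℝ)) this.symm

lemma ch2 (j k : ℕ) (h : k + 1 ≤ j) :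
    ((j+1).choose (k+1) : ℝ) * ((j : ℝ) - k) = (j+1) * (j.choose (k+1)) := by
  have h1 : (j+1).choose (k+1) = (j+1).choose (j-k) := by
    rw [← Nat.choose_symm (by omega : k+1 ≤ j+1)]
    congr 1; omega
  have h2 : (j+1) * j.choose (j-k-1) = (j+1).choose (j-k) * (j-k) := by
    have := Nat.add_one_mul_choose_eq j (j-k-1)
    rwa [(by omega : j - k - 1 + 1 = j - k)] at this
  have h3 : j.choose (j-k-1) = j.choose (k+1) := by
    rw [(by omega : j - k - 1 = j - (k+1)), Nat.choose_symm h]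
  rw [h3] at h2
  have hc : ((j : ℝ) - k) = ((j - k : ℕ) : ℝ) := by
    push_cast [Nat.cast_sub (by omega : k ≤ j)]; ring
  rw [h1, hc]
  exact_mod_cast congrArg (Nat.cast (R := ℝ)) h2.symm

lemma tele (j k : ℕ) (hk : k ≤ j) (y : ℝ) :
    ∑ i ∈ range (k+1), ((j+1).choose i : ℝ) *
        ((i : ℝ) * y ^ (i-1) * (1-y) ^ (j+1-i)
          - ((j+1-i : ℕ) : ℝ) * (y ^ i * (1-y) ^ (j-i)))
      = -(((j:ℝ)+1) * (j.choose k)) * (y ^ k * (1-y) ^ (j-k)) := by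
  induction k with
  | zero => simp; ring
  | succ k ih =>
    have hkj : k ≤ j := by omega
    obtain ⟨d, rfl⟩ : ∃ d, j = k + 1 + d := ⟨j - (k+1), by omega⟩
    rw [Finset.sum_range_succ, ih hkj]
    have e1 : k + 1 + d + 1 - (k+1) = d + 1 := by omega
    have e2 : k + 1 + d - (k+1) = d := by omega
    have e3 : (k+1) - 1 = k := by omega
    have e4 : k + 1 + d - k = d + 1 := by omega
    rw [e1, e2, e3, e4]
    have c1 := ch1 (k + 1 + d) k
    have c2 := ch2 (k + 1 + d) k (by omega)
    push_cast at c1 c2 ⊢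
    linear_combination (y^k*(1-y)^(d+1)) * c1 - (y^(k+1)*(1-y)^d) * c2

lemma betaBinom (j k : ℕ) (hk : k ≤ j) (y : ℝ) :
    ((j:ℝ)+1) * (j.choose k) * ∫ x in y..(1:ℝ), x ^ k * (1-x) ^ (j-k)
      = ∑ i ∈ range (k+1), (((j+1).choose i : ℝ)) * y ^ i * (1-y) ^ (j+1-i) := by
  set g : ℝ → ℝ := fun x => x ^ k * (1-x) ^ (j-k) with hg
  have hgc : Continuous g := by fun_prop
  set F : ℝ → ℝ := fun y => ((j:ℝ)+1) * (j.choose k) * (∫ x in y..(1:ℝ), g x)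
      - ∑ i ∈ range (k+1), (((j+1).choose i : ℝ)) * y ^ i * (1-y) ^ (j+1-i) with hF
  have hFd : ∀ z : ℝ, HasDerivAt F 0 z := by
    intro z
    have hint : HasDerivAt (fun u => ∫ x in u..(1:ℝ), g x) (-g z) z := by
      apply intervalIntegral.integral_hasDerivAt_left
        (hgc.intervalIntegrable z 1)
        (hgc.stronglyMeasurableAtFilter _ _)
        hgc.continuousAt
    have hsum : HasDerivAt (fun y => ∑ i ∈ range (k+1),
        (((j+1).choose i : ℝ)) * y ^ i * (1-y) ^ (j+1-i))
        (∑ i ∈ range (k+1), ((j+1).choose i : ℝ) *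
          ((i : ℝ) * z ^ (i-1) * (1-z) ^ (j+1-i)
            - ((j+1-i : ℕ) : ℝ) * (z ^ i * (1-z) ^ (j-i)))) z := by
      apply HasDerivAt.fun_sum
      intro i hi
      have hik : i ≤ k := Nat.lt_succ_iff.1 (Finset.mem_range.1 hi)
      have hp : HasDerivAt (fun y : ℝ => y ^ i) ((i:ℝ) * z ^ (i-1)) z := hasDerivAt_pow i z
      have hq : HasDerivAt (fun y : ℝ => (1-y) ^ (j+1-i))
          (((j+1-i : ℕ):ℝ) * (1-z) ^ (j+1-i-1) * (0 - 1)) z := by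
        exact (hasDerivAt_pow (j+1-i) (1-z)).comp z
          ((hasDerivAt_const z (1:ℝ)).sub (hasDerivAt_id z))
      have := (hp.mul hq).const_mul (((j+1).choose i : ℝ))
      refine (this.congr_deriv ?_).congr_of_eventuallyEq (Filter.Eventually.of_forall fun w => ?_)
      · have : j + 1 - i - 1 = j - i := by omega
        rw [this]; ring
      · simp only [Pi.mul_apply]; ring
    have := (hint.const_mul (((j:ℝ)+1) * (j.choose k))).fun_sub hsum
    rw [tele j k hk z] at this
    refine this.congr_deriv ?_
    rw [hg]
    ring
  have hconst : F y = F 1 := by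
    apply is_const_of_deriv_eq_zero (fun z => (hFd z).differentiableAt)
      (fun z => (hFd z).deriv)
  have hF1 : F 1 = 0 := by
    rw [hF]
    simp only [intervalIntegral.integral_same, mul_zero, zero_sub, neg_eq_zero, sub_self]
    apply Finset.sum_eq_zero
    intro i hi
    have hik : i ≤ k := Nat.lt_succ_iff.1 (Finset.mem_range.1 hi)
    rw [zero_pow (by omega : j + 1 - i ≠ 0)]
    ring
  have : F y = 0 := hconst.trans hF1
  rw [hF] at this
  simp only [] at this
  linarith [this]


noncomputable def betaM (j k : ℕ) : Measure ℝ :=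
  (volume.restrict (Set.Icc (0:ℝ) 1)).withDensity fun x =>
    ENNReal.ofReal (x ^ k * (1 - x) ^ (j - k) * ((j + 1).factorial : ℝ) /
      ((k.factorial : ℝ) * ((j - k).factorial : ℝ)))

lemma cfact (j k : ℕ) (hk : k ≤ j) :
    ((j + 1).factorial : ℝ) / ((k.factorial : ℝ) * ((j - k).factorial : ℝ))
      = ((j:ℝ)+1) * (j.choose k) := by
  have h := Nat.choose_mul_factorial_mul_factorial hk
  have h1 : ((j+1).factorial : ℝ) = ((j:ℝ)+1) * (j.factorial : ℝ) := by
    rw [Nat.factorial_succ]; push_cast; ring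
  have h2 : ((j.factorial : ℝ)) = (j.choose k : ℝ) * k.factorial * (j-k).factorial := by
    exact_mod_cast congrArg (Nat.cast (R := ℝ)) h.symm
  have hkf : (0:ℝ) < k.factorial := by exact_mod_cast Nat.factorial_pos k
  have hjkf : (0:ℝ) < (j-k).factorial := by exact_mod_cast Nat.factorial_pos (j-k)
  rw [h1, h2]
  field_simp

lemma betaM_Icc (j k : ℕ) (hk : k ≤ j) {a b : ℝ} (h0 : 0 ≤ a) (hab : a ≤ b) (hb : b ≤ 1) :
    betaM j k (Set.Icc a b)
      = ENNReal.ofReal (((j:ℝ)+1) * (j.choose k) * ∫ x in a..b, x ^ k * (1-x) ^ (j-k)) := by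
  set ρ : ℝ → ℝ := fun x => x ^ k * (1 - x) ^ (j - k) * ((j + 1).factorial : ℝ) /
      ((k.factorial : ℝ) * ((j - k).factorial : ℝ)) with hρ
  have hρc : Continuous ρ := by fun_prop
  rw [betaM, withDensity_apply _ measurableSet_Icc,
    Measure.restrict_restrict measurableSet_Icc,
    Set.inter_eq_left.2 (Set.Icc_subset_Icc h0 hb)]
  have hnn : 0 ≤ᵐ[volume.restrict (Set.Icc a b)] ρ := by
    rw [Filter.EventuallyLE, MeasureTheory.ae_restrict_iff' measurableSet_Icc]
    apply Filter.Eventually.of_forall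
    intro x hx
    have hx0 : 0 ≤ x := le_trans h0 hx.1
    have hx1 : x ≤ 1 := le_trans hx.2 hb
    have h1x : 0 ≤ 1 - x := by linarith
    have hkf : (0:ℝ) ≤ (k.factorial : ℝ) := by positivity
    rw [hρ]
    positivity
  rw [← MeasureTheory.ofReal_integral_eq_lintegral_ofReal
    (hρc.integrableOn_Icc) hnn]
  congr 1
  rw [MeasureTheory.integral_Icc_eq_integral_Ioc, ← intervalIntegral.integral_of_le hab]
  have : ∀ x : ℝ, ρ x = (x ^ k * (1-x) ^ (j-k)) * (((j:ℝ)+1) * (j.choose k)) := by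
    intro x
    rw [hρ]
    simp only []
    rw [mul_div_assoc, cfact j k hk]
  simp_rw [this]
  rw [intervalIntegral.integral_mul_const]
  ring


lemma betaBinom_low (j k : ℕ) (hk : k ≤ j) (y : ℝ) :
    ((j:ℝ)+1) * (j.choose k) * ∫ x in (0:ℝ)..y, x ^ k * (1-x) ^ (j-k)
      = ∑ i ∈ Finset.Icc (k+1) (j+1), (((j+1).choose i : ℝ)) * y ^ i * (1-y) ^ (j+1-i) := by
  have hgc : Continuous (fun x : ℝ => x ^ k * (1-x) ^ (j-k)) := by fun_prop
  have hadd : (∫ x in (0:ℝ)..y, x ^ k * (1-x) ^ (j-k))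
      + (∫ x in y..(1:ℝ), x ^ k * (1-x) ^ (j-k))
      = ∫ x in (0:ℝ)..(1:ℝ), x ^ k * (1-x) ^ (j-k) :=
    intervalIntegral.integral_add_adjacent_intervals
      (hgc.intervalIntegrable 0 y) (hgc.intervalIntegrable y 1)
  have h01 : ((j:ℝ)+1) * (j.choose k) * ∫ x in (0:ℝ)..(1:ℝ), x ^ k * (1-x) ^ (j-k) = 1 := by
    rw [betaBinom j k hk 0]
    rw [Finset.sum_eq_single_of_mem 0 (Finset.mem_range.2 (Nat.succ_pos k))]
    · norm_num
    · intro i _ hi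
      rw [zero_pow hi]
      ring
  have htot : ∑ i ∈ range (j+1+1), (((j+1).choose i : ℝ)) * y ^ i * (1-y) ^ (j+1-i) = 1 := by
    have := expand_mgf (j+1) (y := y) 0
    simp only [mul_zero, zero_mul, Real.exp_zero, one_mul] at this
    rw [this]
    norm_num
  have hsub : ∑ i ∈ Finset.Icc (k+1) (j+1), (((j+1).choose i : ℝ)) * y ^ i * (1-y) ^ (j+1-i)
      = (∑ i ∈ range (j+1+1), (((j+1).choose i : ℝ)) * y ^ i * (1-y) ^ (j+1-i))
        - ∑ i ∈ range (k+1), (((j+1).choose i : ℝ)) * y ^ i * (1-y) ^ (j+1-i) := by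
    rw [← Finset.Ico_add_one_right_eq_Icc, Finset.sum_Ico_eq_sub _ (by omega : k+1 ≤ j+1+1)]
  rw [hsub, htot, ← betaBinom j k hk y]
  have : (∫ x in (0:ℝ)..y, x ^ k * (1-x) ^ (j-k))
      = (∫ x in (0:ℝ)..(1:ℝ), x ^ k * (1-x) ^ (j-k))
        - (∫ x in y..(1:ℝ), x ^ k * (1-x) ^ (j-k)) := by linarith
  rw [this]
  nlinarith [h01]

lemma beta_tail (j k : ℕ) (hj : 1 ≤ j) (hk : k ≤ j) {δ : ℝ} (hδ : 0 < δ) :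
    betaM j k {x : ℝ | x ∈ Set.Icc (0:ℝ) 1 ∧ δ/2 ≤ |x - (k:ℝ)/j|}
      ≤ ENNReal.ofReal (2 * Real.exp (-(j:ℝ) * δ^2 / 2)) := by
  have hjpos : (0:ℝ) < j := by exact_mod_cast hj
  set m : ℝ := (k:ℝ)/j with hm
  have hm0 : 0 ≤ m := by positivity
  have hm1 : m ≤ 1 := by
    rw [hm, div_le_one hjpos]; exact_mod_cast hk
  have hkm : (k:ℝ) = m * j := by rw [hm]; field_simp
  have hup : betaM j k (Set.Icc (0:ℝ) 1 ∩ Set.Ici (m + δ/2))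
      ≤ ENNReal.ofReal (Real.exp (-(j:ℝ) * δ^2 / 2)) := by
    by_cases h1m : 1 < m + δ/2
    · have hempty : Set.Icc (0:ℝ) 1 ∩ Set.Ici (m + δ/2) = ∅ := by
        ext x
        simp only [Set.mem_inter_iff, Set.mem_Icc, Set.mem_Ici, Set.mem_empty_iff_false,
          iff_false]
        intro ⟨⟨_, h1⟩, h2⟩
        linarith
      rw [hempty, measure_empty]
      exact zero_le
    · push_neg at h1m
      have hy0 : 0 ≤ m + δ/2 := by linarith
      have hIcc : Set.Icc (0:ℝ) 1 ∩ Set.Ici (m + δ/2) = Set.Icc (m + δ/2) 1 := by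
        ext x
        simp only [Set.mem_inter_iff, Set.mem_Icc, Set.mem_Ici]
        constructor
        · rintro ⟨⟨_, h1⟩, h2⟩; exact ⟨h2, h1⟩
        · rintro ⟨h1, h2⟩; exact ⟨⟨by linarith, h2⟩, h1⟩
      rw [hIcc, betaM_Icc j k hk hy0 h1m le_rfl, betaBinom j k hk (m + δ/2)]
      apply ENNReal.ofReal_le_ofReal
      have hch := chernoff_low (j+1) k (by omega) (by omega) hy0 h1m
        (by push_cast; nlinarith)
      apply le_trans (by exact_mod_cast hch)
      apply Real.exp_le_exp.2
      have hA : ((j:ℝ)+1)*δ/2 ≤ ((j:ℝ)+1) * (m + δ/2) - k := by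
        push_cast
        nlinarith
      rw [div_le_div_iff₀ (by positivity) (by norm_num : (0:ℝ) < 2)]
      push_cast
      have hA0 : (0:ℝ) ≤ ((j:ℝ)+1) * (m + δ/2) - k := le_trans (by positivity) hA
      nlinarith [mul_le_mul hA hA (by positivity) hA0, hjpos, sq_nonneg δ]
  have hlow : betaM j k (Set.Icc (0:ℝ) 1 ∩ Set.Iic (m - δ/2))
      ≤ ENNReal.ofReal (Real.exp (-(j:ℝ) * δ^2 / 2)) := by
    by_cases h0m : m - δ/2 < 0
    · have hempty : Set.Icc (0:ℝ) 1 ∩ Set.Iic (m - δ/2) = ∅ := by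
        ext x
        simp only [Set.mem_inter_iff, Set.mem_Icc, Set.mem_Iic, Set.mem_empty_iff_false,
          iff_false]
        intro ⟨⟨h0, _⟩, h2⟩
        linarith
      rw [hempty, measure_empty]
      exact zero_le
    · push_neg at h0m
      have hy1 : m - δ/2 ≤ 1 := by linarith
      have hIcc : Set.Icc (0:ℝ) 1 ∩ Set.Iic (m - δ/2) = Set.Icc (0:ℝ) (m - δ/2) := by
        ext x
        simp only [Set.mem_inter_iff, Set.mem_Icc, Set.mem_Iic]
        constructor
        · rintro ⟨⟨h0, _⟩, h2⟩; exact ⟨h0, h2⟩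
        · rintro ⟨h1, h2⟩; exact ⟨⟨h1, by linarith⟩, h2⟩
      rw [hIcc, betaM_Icc j k hk le_rfl h0m hy1, betaBinom_low j k hk (m - δ/2)]
      apply ENNReal.ofReal_le_ofReal
      have hch := chernoff_high (j+1) (k+1) (by omega) h0m hy1
        (by push_cast; nlinarith)
      apply le_trans (by exact_mod_cast hch)
      apply Real.exp_le_exp.2
      have hA : ((j:ℝ)+1)*δ/2 ≤ ((k:ℝ)+1) - ((j:ℝ)+1) * (m - δ/2) := by
        nlinarith
      rw [div_le_div_iff₀ (by positivity) (by norm_num : (0:ℝ) < 2)]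
      push_cast
      have hA0 : (0:ℝ) ≤ ((k:ℝ)+1) - ((j:ℝ)+1) * (m - δ/2) := le_trans (by positivity) hA
      nlinarith [mul_le_mul hA hA (by positivity) hA0, hjpos, sq_nonneg δ]
  have hsubset : {x : ℝ | x ∈ Set.Icc (0:ℝ) 1 ∧ δ/2 ≤ |x - m|} ⊆
      (Set.Icc (0:ℝ) 1 ∩ Set.Ici (m + δ/2)) ∪ (Set.Icc (0:ℝ) 1 ∩ Set.Iic (m - δ/2)) := by
    rintro x ⟨hx1, hx2⟩
    rcases le_abs.1 hx2 with h | h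
    · left; exact ⟨hx1, by simp only [Set.mem_Ici]; linarith⟩
    · right; exact ⟨hx1, by simp only [Set.mem_Iic]; linarith⟩
  calc betaM j k {x : ℝ | x ∈ Set.Icc (0:ℝ) 1 ∧ δ/2 ≤ |x - m|}
      ≤ betaM j k ((Set.Icc (0:ℝ) 1 ∩ Set.Ici (m + δ/2)) ∪ (Set.Icc (0:ℝ) 1 ∩ Set.Iic (m - δ/2))) :=
        measure_mono hsubset
    _ ≤ betaM j k (Set.Icc (0:ℝ) 1 ∩ Set.Ici (m + δ/2))
        + betaM j k (Set.Icc (0:ℝ) 1 ∩ Set.Iic (m - δ/2)) := measure_union_le _ _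
    _ ≤ ENNReal.ofReal (Real.exp (-(j:ℝ) * δ^2 / 2))
        + ENNReal.ofReal (Real.exp (-(j:ℝ) * δ^2 / 2)) := add_le_add hup hlow
    _ = ENNReal.ofReal (2 * Real.exp (-(j:ℝ) * δ^2 / 2)) := by
        rw [← ENNReal.ofReal_add (by positivity) (by positivity)]
        ring_nf

end AuxCTS


section Main
open Finset
open scoped ENNReal

/-- In Thompson sampling, if conditionally on `{N = j, s = k}` the sample `ν`
has the `Beta(k+1, j-k+1)` distribution, `s ≤ N ≤ t` a.s., and `Pr(N = j) ≤ 1/t²` for all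
`j ≤ η p* t`, then with `μ̂ = s/N` (`μ̂ = 1` if `N = 0`),
`Pr(|ν - μ̂| ≥ δ/2) ≤ (e^{2δ}+1)(1/(t²(1-e^{-δ²/2})) + e^{-δ² η p* t/2})`. -/
theorem stmt17 {Ω : Type*} [MeasurableSpace Ω] (P : Measure Ω) [IsProbabilityMeasure P]
    (t : ℕ) (ht : 1 ≤ t)
    (η pstar δ : ℝ) (hη : η ∈ Set.Ioo (0 : ℝ) 1) (hp : pstar ∈ Set.Ioc (0 : ℝ) 1)
    (hδ : 0 < δ)
    (N s : Ω → ℕ) (ν : Ω → ℝ)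
    (hNmeas : Measurable N) (hsmeas : Measurable s) (hνmeas : Measurable ν)
    (hle : ∀ᵐ ω ∂P, s ω ≤ N ω ∧ N ω ≤ t)
    (hνrange : ∀ ω, ν ω ∈ Set.Icc (0 : ℝ) 1)
    (hlaw : ∀ j k : ℕ, k ≤ j → j ≤ t → 0 < P {ω | N ω = j ∧ s ω = k} →
      ∀ U : Set ℝ, MeasurableSet U → U ⊆ Set.Icc (0 : ℝ) 1 →
        P ({ω | ν ω ∈ U} ∩ {ω | N ω = j ∧ s ω = k}) =
          P {ω | N ω = j ∧ s ω = k} *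
            ((volume.restrict (Set.Icc (0 : ℝ) 1)).withDensity fun x =>
              ENNReal.ofReal (x ^ k * (1 - x) ^ (j - k) *
                ((j + 1).factorial : ℝ) /
                  ((k.factorial : ℝ) * ((j - k).factorial : ℝ)))) U)
    (htail : ∀ j : ℕ, (j : ℝ) ≤ η * pstar * t →
      P {ω | N ω = j} ≤ ENNReal.ofReal (1 / (t : ℝ) ^ 2)) :
    P {ω | δ / 2 ≤
        |ν ω - (if N ω = 0 then (1 : ℝ) else (s ω : ℝ) / (N ω : ℝ))|} ≤
      ENNReal.ofReal ((Real.exp (2 * δ) + 1) *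
        (1 / ((t : ℝ) ^ 2 * (1 - Real.exp (-δ ^ 2 / 2))) +
          Real.exp (-δ ^ 2 * η * pstar * t / 2))) := by
  classical
  set E : Set Ω := {ω | δ / 2 ≤
      |ν ω - (if N ω = 0 then (1 : ℝ) else (s ω : ℝ) / (N ω : ℝ))|} with hE
  set A : ℕ → ℕ → Set Ω := fun j k => {ω | N ω = j ∧ s ω = k} with hA
  set B : ℕ → Set Ω := fun j => {ω | N ω = j} with hB
  have hAmeas : ∀ j k, MeasurableSet (A j k) := by
    intro j k
    have : A j k = N ⁻¹' {j} ∩ s ⁻¹' {k} := by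
      ext ω; simp [hA, Set.mem_preimage]
    rw [this]
    exact (hNmeas (measurableSet_singleton j)).inter (hsmeas (measurableSet_singleton k))
  have hBmeas : ∀ j, MeasurableSet (B j) := by
    intro j
    have : B j = N ⁻¹' {j} := by ext ω; simp [hB, Set.mem_preimage]
    rw [this]; exact hNmeas (measurableSet_singleton j)
  set c : ℕ → ℝ≥0∞ := fun j =>
    ENNReal.ofReal ((Real.exp (2*δ) + 1) * Real.exp (-(j:ℝ) * δ^2 / 2)) with hc
  have hexp1 : (1:ℝ) ≤ Real.exp (2*δ) := Real.one_le_exp (by linarith)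
  -- per-pair bound
  have hpair : ∀ j k : ℕ, j ≤ t → k ≤ j → P (E ∩ A j k) ≤ P (A j k) * c j := by
    intro j k hjt hkj
    rcases eq_or_lt_of_le ((zero_le : 0 ≤ P (A j k))) with hP0 | hPpos
    · calc P (E ∩ A j k) ≤ P (A j k) := measure_mono Set.inter_subset_right
        _ = 0 := hP0.symm
        _ ≤ P (A j k) * c j := zero_le
    rcases Nat.eq_zero_or_pos j with hj0 | hjpos
    · subst hj0
      have h1c : 1 ≤ c 0 := by
        rw [hc]
        simp only [Nat.cast_zero, neg_zero, zero_mul, zero_div, Real.exp_zero, mul_one]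
        rw [ENNReal.one_le_ofReal]
        linarith
      calc P (E ∩ A 0 k) ≤ P (A 0 k) := measure_mono Set.inter_subset_right
        _ = P (A 0 k) * 1 := (mul_one _).symm
        _ ≤ P (A 0 k) * c 0 := mul_le_mul_right h1c _
    · -- j ≥ 1
      set U : Set ℝ := {x : ℝ | x ∈ Set.Icc (0:ℝ) 1 ∧ δ/2 ≤ |x - (k:ℝ)/j|} with hU
      have hUmeas : MeasurableSet U := by
        have h2 : MeasurableSet {x : ℝ | δ/2 ≤ |x - (k:ℝ)/j|} :=
          measurableSet_le measurable_const
            ((continuous_abs.comp (continuous_id.sub continuous_const)).measurable)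
        have : U = Set.Icc (0:ℝ) 1 ∩ {x : ℝ | δ/2 ≤ |x - (k:ℝ)/j|} := rfl
        rw [this]
        exact measurableSet_Icc.inter h2
      have hUsub : U ⊆ Set.Icc (0:ℝ) 1 := fun x hx => hx.1
      have hEA : E ∩ A j k = {ω | ν ω ∈ U} ∩ A j k := by
        ext ω
        simp only [hE, hA, hU, Set.mem_inter_iff, Set.mem_setOf_eq]
        constructor
        · rintro ⟨h1, h2, h3⟩
          refine ⟨⟨hνrange ω, ?_⟩, h2, h3⟩
          rw [h2, h3, if_neg (by omega : ¬ j = 0)] at h1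
          exact h1
        · rintro ⟨⟨_, h1⟩, h2, h3⟩
          refine ⟨?_, h2, h3⟩
          rw [h2, h3, if_neg (by omega : ¬ j = 0)]
          exact h1
      rw [hEA, hlaw j k hkj hjt hPpos U hUmeas hUsub]
      apply mul_le_mul_right
      have h1 := beta_tail j k hjpos hkj hδ
      rw [betaM] at h1
      apply le_trans h1
      apply ENNReal.ofReal_le_ofReal
      have : (0:ℝ) ≤ Real.exp (-(j:ℝ) * δ^2 / 2) := (Real.exp_pos _).le
      nlinarith
  -- decomposition
  have hG : P {ω | ¬(s ω ≤ N ω ∧ N ω ≤ t)} = 0 := ae_iff.mp hle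
  have hdecomp : P E ≤ ∑ j ∈ range (t+1), ∑ k ∈ range (j+1), P (E ∩ A j k) := by
    have hsub : E ⊆ (⋃ j ∈ range (t+1), ⋃ k ∈ range (j+1), E ∩ A j k)
        ∪ {ω | ¬(s ω ≤ N ω ∧ N ω ≤ t)} := by
      intro ω hω
      by_cases hg : s ω ≤ N ω ∧ N ω ≤ t
      · left
        refine Set.mem_biUnion (Finset.mem_range.2 (by omega : N ω < t+1)) ?_
        refine Set.mem_biUnion (Finset.mem_range.2 (by omega : s ω < N ω + 1)) ?_
        exact ⟨hω, rfl, rfl⟩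
      · right; exact hg
    calc P E ≤ P (⋃ j ∈ range (t+1), ⋃ k ∈ range (j+1), E ∩ A j k)
          + P {ω | ¬(s ω ≤ N ω ∧ N ω ≤ t)} :=
            le_trans (measure_mono hsub) (measure_union_le _ _)
      _ = P (⋃ j ∈ range (t+1), ⋃ k ∈ range (j+1), E ∩ A j k) := by rw [hG, add_zero]
      _ ≤ ∑ j ∈ range (t+1), P (⋃ k ∈ range (j+1), E ∩ A j k) := measure_biUnion_finset_le _ _
      _ ≤ ∑ j ∈ range (t+1), ∑ k ∈ range (j+1), P (E ∩ A j k) := by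
          apply Finset.sum_le_sum; intro j _; exact measure_biUnion_finset_le _ _
  have hinner : ∀ j ∈ range (t+1), ∑ k ∈ range (j+1), P (E ∩ A j k) ≤ P (B j) * c j := by
    intro j hj
    have hjt : j ≤ t := Nat.lt_succ_iff.1 (Finset.mem_range.1 hj)
    calc ∑ k ∈ range (j+1), P (E ∩ A j k) ≤ ∑ k ∈ range (j+1), P (A j k) * c j := by
          apply Finset.sum_le_sum; intro k hk
          exact hpair j k hjt (Nat.lt_succ_iff.1 (Finset.mem_range.1 hk))
      _ = (∑ k ∈ range (j+1), P (A j k)) * c j := (Finset.sum_mul _ _ _).symm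
      _ ≤ P (B j) * c j := by
          apply mul_le_mul_left
          have hdisj : (↑(range (j+1)) : Set ℕ).Pairwise (Function.onFun Disjoint (A j)) := by
            intro a _ b _ hab
            simp only [Function.onFun]
            rw [Set.disjoint_left]
            rintro ω ⟨_, ha⟩ ⟨_, hb⟩
            exact hab (by omega)
          rw [← measure_biUnion_finset hdisj (fun k _ => hAmeas j k)]
          apply measure_mono
          intro ω hω
          rcases Set.mem_iUnion₂.1 hω with ⟨k, _, hk1, _⟩
          exact hk1
  set e2 : ℝ := Real.exp (2*δ) + 1 with he2
  have he2pos : 0 < e2 := by positivity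
  set E1 : ℝ := Real.exp (-δ^2/2) with hE1
  have hE1pos : 0 < E1 := Real.exp_pos _
  have hE1lt : E1 < 1 := Real.exp_lt_one_iff.2 (by nlinarith)
  have htpos : (0:ℝ) < (t:ℝ)^2 := by
    have : (1:ℝ) ≤ (t:ℝ) := by exact_mod_cast ht
    positivity
  have hexpj : ∀ j : ℕ, Real.exp (-(j:ℝ) * δ^2 / 2) = E1 ^ j := by
    intro j
    rw [hE1, ← Real.exp_nat_mul]
    congr 1; ring
  have hsum : ∑ j ∈ range (t+1), P (B j) * c j ≤
      ENNReal.ofReal (e2 * (1/((t:ℝ)^2 * (1-E1)))) +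
      ENNReal.ofReal (e2 * Real.exp (-δ^2 * η * pstar * t / 2)) := by
    rw [← Finset.sum_filter_add_sum_filter_not (range (t+1)) (fun j : ℕ => (j:ℝ) ≤ η*pstar*t)]
    apply add_le_add
    · -- small j
      calc ∑ j ∈ (range (t+1)).filter (fun j : ℕ => (j:ℝ) ≤ η*pstar*t), P (B j) * c j
          ≤ ∑ j ∈ (range (t+1)).filter (fun j : ℕ => (j:ℝ) ≤ η*pstar*t),
              ENNReal.ofReal ((1/(t:ℝ)^2) * (e2 * E1 ^ j)) := by
            apply Finset.sum_le_sum
            intro j hj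
            have hjle : (j:ℝ) ≤ η*pstar*t := (Finset.mem_filter.1 hj).2
            have h1 := htail j hjle
            calc P (B j) * c j ≤ ENNReal.ofReal (1/(t:ℝ)^2) * c j :=
                  mul_le_mul_left h1 _
              _ = ENNReal.ofReal ((1/(t:ℝ)^2) * (e2 * E1 ^ j)) := by
                  rw [hc]
                  simp only []
                  rw [← ENNReal.ofReal_mul (by positivity), hexpj j, he2]
        _ ≤ ∑ j ∈ range (t+1), ENNReal.ofReal ((1/(t:ℝ)^2) * (e2 * E1 ^ j)) := by
            apply Finset.sum_le_sum_of_subset_of_nonneg (Finset.filter_subset _ _)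
            intro i _ _
            exact zero_le
        _ = ENNReal.ofReal (∑ j ∈ range (t+1), (1/(t:ℝ)^2) * (e2 * E1 ^ j)) := by
            rw [ENNReal.ofReal_sum_of_nonneg]
            intro i _
            positivity
        _ ≤ ENNReal.ofReal (e2 * (1/((t:ℝ)^2 * (1-E1)))) := by
            apply ENNReal.ofReal_le_ofReal
            have hgeom : ∑ j ∈ range (t+1), E1 ^ j ≤ 1/(1-E1) := by
              rw [geom_sum_eq (ne_of_lt hE1lt)]
              have h1 : (E1^(t+1) - 1)/(E1 - 1) = (1 - E1^(t+1))/(1 - E1) := by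
                rw [← neg_div_neg_eq]; ring_nf
              rw [h1]
              gcongr
              · nlinarith [pow_nonneg hE1pos.le (t+1)]
            calc ∑ j ∈ range (t+1), (1/(t:ℝ)^2) * (e2 * E1 ^ j)
                = (1/(t:ℝ)^2) * e2 * ∑ j ∈ range (t+1), E1 ^ j := by
                  rw [Finset.mul_sum]
                  apply Finset.sum_congr rfl
                  intro i _; ring
              _ ≤ (1/(t:ℝ)^2) * e2 * (1/(1-E1)) := by
                  apply mul_le_mul_of_nonneg_left hgeom (by positivity)
              _ = e2 * (1/((t:ℝ)^2 * (1-E1))) := by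
                  field_simp
    · -- large j
      have hC2 : ∀ j ∈ (range (t+1)).filter (fun j : ℕ => ¬((j:ℝ) ≤ η*pstar*t)),
          c j ≤ ENNReal.ofReal (e2 * Real.exp (-δ^2 * η * pstar * t / 2)) := by
        intro j hj
        have hjgt : ¬((j:ℝ) ≤ η*pstar*t) := (Finset.mem_filter.1 hj).2
        push_neg at hjgt
        rw [hc]
        apply ENNReal.ofReal_le_ofReal
        try simp only []
        rw [he2]
        apply mul_le_mul_of_nonneg_left _ (by positivity)
        apply Real.exp_le_exp.2
        nlinarith [sq_nonneg δ]
      calc ∑ j ∈ (range (t+1)).filter (fun j : ℕ => ¬((j:ℝ) ≤ η*pstar*t)), P (B j) * c j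
          ≤ ∑ j ∈ (range (t+1)).filter (fun j : ℕ => ¬((j:ℝ) ≤ η*pstar*t)),
              P (B j) * ENNReal.ofReal (e2 * Real.exp (-δ^2 * η * pstar * t / 2)) := by
            apply Finset.sum_le_sum
            intro j hj
            exact mul_le_mul_right (hC2 j hj) _
        _ = (∑ j ∈ (range (t+1)).filter (fun j : ℕ => ¬((j:ℝ) ≤ η*pstar*t)), P (B j)) *
              ENNReal.ofReal (e2 * Real.exp (-δ^2 * η * pstar * t / 2)) :=
            (Finset.sum_mul _ _ _).symm
        _ ≤ 1 * ENNReal.ofReal (e2 * Real.exp (-δ^2 * η * pstar * t / 2)) := by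
            apply mul_le_mul_left
            have hdisjB : (↑((range (t+1)).filter (fun j : ℕ => ¬((j:ℝ) ≤ η*pstar*t))) : Set ℕ).Pairwise
                (Function.onFun Disjoint B) := by
              intro a _ b _ hab
              simp only [Function.onFun]
              rw [Set.disjoint_left]
              rintro ω ha hb
              exact hab (by rw [hB] at ha hb; simp only [Set.mem_setOf_eq] at ha hb; omega)
            rw [← measure_biUnion_finset hdisjB (fun j _ => hBmeas j)]
            calc P _ ≤ P Set.univ := measure_mono (Set.subset_univ _)
              _ = 1 := measure_univ
        _ = ENNReal.ofReal (e2 * Real.exp (-δ^2 * η * pstar * t / 2)) := one_mul _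
  calc P E ≤ ∑ j ∈ range (t+1), ∑ k ∈ range (j+1), P (E ∩ A j k) := hdecomp
    _ ≤ ∑ j ∈ range (t+1), P (B j) * c j := Finset.sum_le_sum hinner
    _ ≤ ENNReal.ofReal (e2 * (1/((t:ℝ)^2 * (1-E1)))) +
        ENNReal.ofReal (e2 * Real.exp (-δ^2 * η * pstar * t / 2)) := hsum
    _ = ENNReal.ofReal (e2 * (1/((t:ℝ)^2 * (1-E1))) +
        e2 * Real.exp (-δ^2 * η * pstar * t / 2)) := by
        have h1E : (0:ℝ) < 1 - E1 := by linarith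
        rw [← ENNReal.ofReal_add (mul_nonneg he2pos.le (one_div_nonneg.2
          (mul_nonneg htpos.le h1E.le))) (mul_nonneg he2pos.le (Real.exp_pos _).le)]
    _ = ENNReal.ofReal ((Real.exp (2 * δ) + 1) *
        (1 / ((t : ℝ) ^ 2 * (1 - Real.exp (-δ ^ 2 / 2))) +
          Real.exp (-δ ^ 2 * η * pstar * t / 2))) := by
        rw [he2, hE1]
        congr 1
        ring

end Main
end
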